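/- arXiv:1807.02837 — 9 statements merged into one kernel-verified Lean document; each statement's English description precedes it below -/
import Mathlib

section
/- Let L : (0,∞) → (0,∞) be slowly varying at ∞ and let t₀ ∈ (0,∞) be such that L is bounded on every compact subset of [t₀, ∞). If α > 0, then ∫_{t₀}^{t} L(u) α u^{α−1} du is asymptotically equivalent to t^α L(t) as t → ∞, i.e. (∫_{t₀}^{t} L(u) α u^{α−1} du) / (t^α L(t)) → 1 as t → ∞. -/
/-!
Substituting `u = s t` turns the quotient into `∫_{t₀/t}^1 (L(st)/L(t)) α s^{α-1} ds`, whose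
integrand tends to `α s^{α-1}` pointwise; dominated convergence then gives the limit
`∫_0^1 α s^{α-1} ds = 1`. The dominating function comes from a Potter bound
`L(st)/L(t) ≤ C s^{-α/2}`, which follows by chaining the uniform convergence theorem for slowly
varying functions along a geometric sequence of points (below a fixed `T`, local boundedness of
`L` takes over). Uniform convergence itself is proved in the additive form `h(x+u) - h(x) → 0`,
`h = log ∘ L ∘ exp`, by Egorov's theorem: two sets of small measure cannot cover an interval of
length `c`.
-/

open MeasureTheory Filter Real Set

/-- `L : (0,∞) → (0,∞)` is slowly varying at `∞`: for every `u > 0`,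
`L(ut)/L(t) → 1` as `t → ∞`. -/
def SlowlyVaryingAtTop (L : ℝ → ℝ) : Prop :=
  ∀ u : ℝ, 0 < u → Filter.Tendsto (fun t => L (u * t) / L t) Filter.atTop (nhds 1)

open Topology

theorem exists_tendstoUniformlyOn_sub_diff {h : ℝ → ℝ} (hm : Measurable h)
    (hconv : ∀ u, Tendsto (fun x => h (x + u) - h x) atTop (𝓝 0)) {y : ℕ → ℝ}
    (hy : Tendsto y atTop atTop) {S : Set ℝ} (hS : MeasurableSet S) (hSfin : volume S ≠ ⊤)
    {δ : ℝ} (hδ : 0 < δ) :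
    ∃ B : Set ℝ, volume B ≤ ENNReal.ofReal δ ∧
      TendstoUniformlyOn (fun n t => h (y n + t) - h (y n)) 0 atTop (S \ B) := by
  obtain ⟨B, -, -, hB, hunif⟩ := tendstoUniformlyOn_of_ae_tendsto (μ := volume)
    (fun n => ((hm.comp (measurable_const_add (y n))).sub measurable_const).stronglyMeasurable)
    stronglyMeasurable_const hS hSfin (ae_of_all _ fun t _ => (hconv t).comp hy) hδ
  exact ⟨B, hB, hunif⟩

theorem exists_mem_Icc_notMem_of_volume_add_lt {B B' : Set ℝ} {a c : ℝ}
    (hBB' : volume B + volume B' < ENNReal.ofReal c) :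
    ∃ t ∈ Icc a (a + c), t ∉ B ∧ t + -a ∉ B' := by
  by_contra! hcover
  have hsub : Icc a (a + c) ⊆ B ∪ (fun s => s + -a) ⁻¹' B' := fun t ht =>
    (em (t ∈ B)).elim Or.inl fun htB => Or.inr (hcover t ht htB)
  have := calc ENNReal.ofReal c = volume (Icc a (a + c)) := by simp [Real.volume_Icc]
    _ ≤ volume (B ∪ (fun s => s + -a) ⁻¹' B') := measure_mono hsub
    _ ≤ volume B + volume B' := (measure_union_le _ _).trans_eq (by rw [measure_preimage_add_right])
  exact this.not_gt hBB'

theorem tendstoUniformlyOn_sub_of_tendsto_sub {h : ℝ → ℝ} (hm : Measurable h)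
    (hconv : ∀ u, Tendsto (fun x => h (x + u) - h x) atTop (𝓝 0)) {c : ℝ} (hc : 0 < c) :
    TendstoUniformlyOn (fun x u => h (x + u) - h x) 0 atTop (Icc 0 c) := by
  rw [Metric.tendstoUniformlyOn_iff]
  intro ε hε
  by_contra hfar
  rw [not_eventually, frequently_atTop] at hfar
  choose x hx hbad using fun n : ℕ => hfar n
  push Not at hbad
  choose u hu hbig using hbad
  have hxT : Tendsto x atTop atTop := tendsto_atTop_mono hx tendsto_natCast_atTop_atTop
  have hxuT : Tendsto (fun n => x n + u n) atTop atTop :=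
    tendsto_atTop_mono (fun n => le_add_of_nonneg_right (hu n).1) hxT
  obtain ⟨B, hB, hxB⟩ := exists_tendstoUniformlyOn_sub_diff hm hconv hxT measurableSet_Icc
    measure_Icc_lt_top.ne (by positivity : 0 < c / 4) (S := Icc 0 (2 * c))
  obtain ⟨B', hB', hxuB'⟩ := exists_tendstoUniformlyOn_sub_diff hm hconv hxuT measurableSet_Icc
    measure_Icc_lt_top.ne (by positivity : 0 < c / 4) (S := Icc 0 (2 * c))
  rw [Metric.tendstoUniformlyOn_iff] at hxB hxuB'
  obtain ⟨n, hn, hn'⟩ :=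
    ((hxB (ε / 2) (by positivity)).and (hxuB' (ε / 2) (by positivity))).exists
  -- `t` is a good shift for the base point `x n`, and `t - u n` one for `x n + u n`
  obtain ⟨t, ht, htB, htB'⟩ := exists_mem_Icc_notMem_of_volume_add_lt (a := u n) (calc
    volume B + volume B' ≤ ENNReal.ofReal (c / 4) + ENNReal.ofReal (c / 4) := add_le_add hB hB'
    _ < ENNReal.ofReal c := by
      rw [← ENNReal.ofReal_add (by positivity) (by positivity)]
      exact (ENNReal.ofReal_lt_ofReal_iff hc).2 (by linarith))
  have h1 := hn t ⟨⟨(hu n).1.trans ht.1, by linarith [(hu n).2, ht.2]⟩, htB⟩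
  have h2 := hn' (t + -u n) ⟨⟨by linarith [ht.1], by linarith [(hu n).1, ht.2]⟩, htB'⟩
  have h3 := hbig n
  simp only [Pi.zero_apply, dist_zero_left, Real.norm_eq_abs] at h1 h2 h3
  rw [show x n + u n + (t + -u n) = x n + t by ring] at h2
  have := abs_sub_le (h (x n + u n)) (h (x n + t)) (h (x n))
  rw [abs_sub_comm (h (x n + u n)) (h (x n + t))] at this
  linarith

theorem sub_le_mul_of_local_sub_le {g : ℝ → ℝ} {X c A : ℝ} (hc : 0 < c)
    (hstep : ∀ y x, X ≤ y → y ≤ x → x ≤ y + c → g y - g x ≤ A) {y x : ℝ} (hXy : X ≤ y)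
    (hyx : y ≤ x) : g y - g x ≤ A * ((x - y) / c + 1) := by
  have hA : 0 ≤ A := by simpa using hstep y y hXy le_rfl (by linarith)
  have chain : ∀ n : ℕ, ∀ y, X ≤ y → y ≤ x → x ≤ y + n * c → g y - g x ≤ n * A := by
    intro n
    induction n with
    | zero => intro y _ hyx hxy; simp [le_antisymm hyx (by simpa using hxy)]
    | succ n ih =>
      intro y hXy hyx hxy
      by_cases hnear : x ≤ y + c
      · have := hstep y x hXy hyx hnear
        push_cast
        nlinarith
      · have := hstep y (y + c) hXy (by linarith) le_rfl
        have := ih (y + c) (by linarith) (by linarith) (by push_cast at hxy; linarith)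
        push_cast
        linarith
  set n := ⌈(x - y) / c⌉₊
  have hn : (x - y) / c ≤ n := Nat.le_ceil _
  have hn' : (n : ℝ) < (x - y) / c + 1 := Nat.ceil_lt_add_one (div_nonneg (by linarith) hc.le)
  calc g y - g x ≤ n * A := chain n y hXy hyx (by rw [div_le_iff₀ hc] at hn; linarith)
    _ ≤ A * ((x - y) / c + 1) := by nlinarith

theorem SlowlyVaryingAtTop.tendsto_log_comp_exp_add_sub {L : ℝ → ℝ} (hL : SlowlyVaryingAtTop L)
    (hLpos : ∀ t > 0, 0 < L t) (u : ℝ) :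
    Tendsto (fun x => log (L (exp (x + u))) - log (L (exp x))) atTop (𝓝 0) := by
  have := ((hL (exp u) (exp_pos u)).log one_ne_zero).comp tendsto_exp_atTop
  rw [log_one] at this
  refine this.congr fun x => ?_
  simp only [Function.comp_apply, exp_add, mul_comm (exp x)]
  rw [log_div (hLpos _ (by positivity)).ne' (hLpos _ (exp_pos x)).ne']

theorem SlowlyVaryingAtTop.exists_le_div_rpow_mul {L : ℝ → ℝ} (hL : SlowlyVaryingAtTop L)
    (hLmeas : Measurable L) (hLpos : ∀ t > 0, 0 < L t) {η : ℝ} (hη : 0 < η) :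
    ∃ T > 0, ∀ u t, T ≤ u → u ≤ t → L u ≤ exp η * (t / u) ^ η * L t := by
  set h : ℝ → ℝ := fun x => log (L (exp x))
  have hm : Measurable h := measurable_log.comp (hLmeas.comp measurable_exp)
  have hunif := tendstoUniformlyOn_sub_of_tendsto_sub hm
    (hL.tendsto_log_comp_exp_add_sub hLpos) one_pos
  rw [Metric.tendstoUniformlyOn_iff] at hunif
  obtain ⟨X, hX⟩ := eventually_atTop.1 (hunif η hη)
  have hstep : ∀ y x, X ≤ y → y ≤ x → x ≤ y + 1 → h y - h x ≤ η := by
    intro y x hXy hyx hxy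
    have := hX y hXy (x - y) ⟨by linarith, by linarith⟩
    rw [Pi.zero_apply, dist_zero_left, norm_eq_abs, add_sub_cancel] at this
    linarith [neg_abs_le (h x - h y)]
  refine ⟨exp X, exp_pos X, fun u t hu hut => ?_⟩
  have hu0 : 0 < u := (exp_pos X).trans_le hu
  have ht0 : 0 < t := hu0.trans_le hut
  have hh : ∀ x > 0, h (log x) = log (L x) := fun x hx => by simp only [h, exp_log hx]
  have key := sub_le_mul_of_local_sub_le one_pos hstep
    ((le_log_iff_exp_le hu0).2 hu) (log_le_log hu0 hut)
  rw [hh _ hu0, hh _ ht0, div_one] at key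
  calc L u = exp (log (L u)) := (exp_log (hLpos _ hu0)).symm
    _ ≤ exp (η + (log t - log u) * η + log (L t)) := exp_le_exp.2 (by linarith)
    _ = exp η * (t / u) ^ η * L t := by
      rw [exp_add, exp_add, exp_log (hLpos _ ht0), rpow_def_of_pos (div_pos ht0 hu0),
        log_div ht0.ne' hu0.ne']

theorem SlowlyVaryingAtTop.exists_le_div_rpow_mul_of_bounded {L : ℝ → ℝ}
    (hL : SlowlyVaryingAtTop L) (hLmeas : Measurable L) (hLpos : ∀ t > 0, 0 < L t) {t₀ : ℝ}
    (ht₀ : 0 ≤ t₀) (hbdd : ∀ b, ∃ M, ∀ u ∈ Icc t₀ b, L u ≤ M) {η : ℝ} (hη : 0 < η) :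
    ∃ C > 0, ∀ᶠ t in atTop, ∀ u ∈ Ioc t₀ t, L u ≤ C * (t / u) ^ η * L t := by
  obtain ⟨T₁, hT₁, hpotter⟩ := hL.exists_le_div_rpow_mul hLmeas hLpos hη
  set T := max T₁ t₀
  have hT : 0 < T := hT₁.trans_le (le_max_left _ _)
  obtain ⟨M, hM⟩ := hbdd T
  have hLT := hLpos T hT
  have hMLT : 1 ≤ M / L T := (one_le_div hLT).2 (hM T ⟨le_max_right _ _, le_rfl⟩)
  refine ⟨exp η * (M / L T), by positivity, ?_⟩
  filter_upwards [eventually_ge_atTop T] with t hTt u ⟨ht₀u, hut⟩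
  have hu : 0 < u := ht₀.trans_lt ht₀u
  have hLt := hLpos t (hu.trans_le hut)
  rcases le_or_gt T₁ u with hT₁u | huT₁
  · calc L u ≤ exp η * (t / u) ^ η * L t := hpotter u t hT₁u hut
      _ ≤ exp η * (M / L T) * (t / u) ^ η * L t := by
        have : 0 ≤ (t / u) ^ η := by have := hu.trans_le hut; positivity
        gcongr
        exact le_mul_of_one_le_right (exp_pos η).le hMLT
  · have huT : u ≤ T := huT₁.le.trans (le_max_left _ _)
    calc L u ≤ M := hM u ⟨ht₀u.le, huT⟩
      _ = M / L T * L T := (div_mul_cancel₀ _ hLT.ne').symm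
      _ ≤ M / L T * (exp η * (t / T) ^ η * L t) := by
        gcongr
        exact hpotter T t (le_max_left _ _) hTt
      _ ≤ M / L T * (exp η * (t / u) ^ η * L t) := by
        have := hT.le.trans hTt
        gcongr
      _ = exp η * (M / L T) * (t / u) ^ η * L t := by ring

theorem setIntegral_Ioc_mul_rpow_div_eq {L : ℝ → ℝ} {t₀ t α : ℝ} (ht₀ : 0 ≤ t₀) (ht₀t : t₀ ≤ t)
    (ht : 0 < t) :
    (∫ u in Ioc t₀ t, L u * (α * u ^ (α - 1))) / (t ^ α * L t) =
      ∫ s in Ioc (t₀ / t) 1, L (s * t) / L t * (α * s ^ (α - 1)) := by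
  rw [← intervalIntegral.integral_of_le ht₀t,
    ← intervalIntegral.integral_of_le (div_le_one_of_le₀ ht₀t ht.le)]
  have hsubst := intervalIntegral.integral_comp_mul_right
    (fun u => L u * (α * u ^ (α - 1))) ht.ne' (a := t₀ / t) (b := 1)
  rw [div_mul_cancel₀ _ ht.ne', one_mul, smul_eq_mul] at hsubst
  have hpoint : ∀ s ∈ uIcc (t₀ / t) 1, L (s * t) / L t * (α * s ^ (α - 1)) =
      (t ^ α * L t)⁻¹ * t * (L (s * t) * (α * (s * t) ^ (α - 1))) := by
    intro s hs
    have hs0 : 0 ≤ s := (le_min (by positivity) zero_le_one).trans hs.1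
    rw [mul_rpow hs0 ht.le, rpow_sub_one ht.ne']
    by_cases hLt : L t = 0
    · simp [hLt]
    field_simp
  rw [intervalIntegral.integral_congr hpoint, intervalIntegral.integral_const_mul, hsubst, mul_assoc,
    ← mul_assoc t, mul_inv_cancel₀ ht.ne', one_mul, div_eq_inv_mul]

theorem SlowlyVaryingAtTop.tendsto_setIntegral_Ioc_div_mul_rpow {L : ℝ → ℝ}
    (hL : SlowlyVaryingAtTop L) (hLmeas : Measurable L) (hLpos : ∀ t > 0, 0 < L t)
    {t₀ α η C : ℝ} (ht₀ : 0 ≤ t₀) (hα : 0 < α) (hηα : η < α) (hC : 0 ≤ C)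
    (hpotter : ∀ᶠ t in atTop, ∀ u ∈ Ioc t₀ t, L u ≤ C * (t / u) ^ η * L t) :
    Tendsto (fun t => ∫ s in Ioc (t₀ / t) 1, L (s * t) / L t * (α * s ^ (α - 1))) atTop (𝓝 1) := by
  have hone : ∫ s, (Ioc 0 1).indicator (fun s => α * s ^ (α - 1)) s = 1 := by
    rw [integral_indicator measurableSet_Ioc, ← intervalIntegral.integral_of_le zero_le_one,
      intervalIntegral.integral_const_mul, integral_rpow (Or.inl (by linarith))]
    simp [hα.ne']
  suffices hlim : Tendsto (fun t => ∫ s, (Ioc (t₀ / t) 1).indicator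
      (fun s => L (s * t) / L t * (α * s ^ (α - 1))) s) atTop
      (𝓝 (∫ s, (Ioc 0 1).indicator (fun s => α * s ^ (α - 1)) s)) by
    simpa only [hone, integral_indicator measurableSet_Ioc] using hlim
  refine tendsto_integral_filter_of_dominated_convergence
    ((Ioc 0 1).indicator fun s => C * α * s ^ (α - η - 1)) ?_ ?_ ?_ ?_
  · exact Eventually.of_forall fun t =>
      (Measurable.indicator (by fun_prop) measurableSet_Ioc).aestronglyMeasurable
  · filter_upwards [hpotter, eventually_gt_atTop 0] with t hbound ht
    refine ae_of_all _ fun s => ?_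
    by_cases hs : s ∈ Ioc (t₀ / t) 1
    · have hs0 : 0 < s := (div_nonneg ht₀ ht.le).trans_lt hs.1
      have hst : s * t ∈ Ioc t₀ t := ⟨(div_lt_iff₀ ht).1 hs.1, mul_le_of_le_one_left ht.le hs.2⟩
      have hLt := hLpos t ht
      have hratio : L (s * t) / L t ≤ C * s ^ (-η) := by
        have hts : t / (s * t) = s⁻¹ := by field_simp
        rw [div_le_iff₀ hLt, rpow_neg hs0.le, ← inv_rpow hs0.le, ← hts]
        exact hbound _ hst
      have hLst := hLpos _ (mul_pos hs0 ht)
      rw [indicator_of_mem hs, indicator_of_mem (show s ∈ Ioc 0 1 from ⟨hs0, hs.2⟩),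
        norm_of_nonneg (by positivity)]
      calc L (s * t) / L t * (α * s ^ (α - 1)) ≤ C * s ^ (-η) * (α * s ^ (α - 1)) := by
            gcongr
        _ = C * α * s ^ (α - η - 1) := by
            rw [show α - η - 1 = -η + (α - 1) by ring, rpow_add hs0]; ring
    · rw [indicator_of_notMem hs, norm_zero]
      exact indicator_nonneg (fun s hs => by have := hs.1; positivity) s
  · rw [integrable_indicator_iff measurableSet_Ioc]
    exact (intervalIntegrable_iff_integrableOn_Ioc_of_le zero_le_one).1
      ((intervalIntegral.intervalIntegrable_rpow' (by linarith)).const_mul (C * α))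
  · refine ae_of_all _ fun s => ?_
    have ht₀t : Tendsto (fun t => t₀ / t) atTop (𝓝 0) := tendsto_const_nhds.div_atTop tendsto_id
    by_cases hs : s ∈ Ioc 0 1
    · rw [indicator_of_mem hs]
      refine Tendsto.congr' ?_ (by simpa using (hL s hs.1).mul_const (α * s ^ (α - 1)))
      filter_upwards [ht₀t.eventually (gt_mem_nhds hs.1)] with t ht
      rw [indicator_of_mem (show s ∈ Ioc (t₀ / t) 1 from ⟨ht, hs.2⟩)]
    · rw [indicator_of_notMem hs]
      refine tendsto_const_nhds.congr' ?_
      filter_upwards [eventually_gt_atTop 0] with t ht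
      rw [indicator_of_notMem]
      contrapose! hs
      exact ⟨(div_nonneg ht₀ ht.le).trans_lt hs.1, hs.2⟩

/-- Karamata: if `L` is slowly varying at `∞` and locally bounded on `[t₀, ∞)`, and `α > 0`,
then `∫_{t₀}^t L(u) α u^{α-1} du ∼ t^α L(t)` as `t → ∞`. -/
theorem stmt_1 (L : ℝ → ℝ) (hLmeas : Measurable L) (hLpos : ∀ t > 0, 0 < L t)
    (hL : SlowlyVaryingAtTop L) (t₀ : ℝ) (ht₀ : 0 < t₀)
    (hbdd : ∀ K : Set ℝ, IsCompact K → K ⊆ Set.Ici t₀ → ∃ M : ℝ, ∀ t ∈ K, L t ≤ M)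
    (α : ℝ) (hα : 0 < α) :
    Filter.Tendsto
      (fun t => (∫ u in Set.Ioc t₀ t, L u * (α * u ^ (α - 1))) / (t ^ α * L t))
      Filter.atTop (nhds 1) := by
  obtain ⟨C, hC, hpotter⟩ := hL.exists_le_div_rpow_mul_of_bounded hLmeas hLpos ht₀.le
    (fun b => hbdd _ isCompact_Icc Icc_subset_Ici_self) (half_pos hα)
  refine (hL.tendsto_setIntegral_Ioc_div_mul_rpow hLmeas hLpos ht₀.le hα (half_lt_self hα) hC.le
    hpotter).congr' ?_
  filter_upwards [eventually_ge_atTop t₀] with t ht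
  exact (setIntegral_Ioc_mul_rpow_div_eq ht₀.le ht (ht₀.trans_le ht)).symm
end

section
/- Let L : (0,∞) → (0,∞) be slowly varying at ∞. If α < 0, then ∫_{t}^{∞} L(u) (−α) u^{α−1} du < ∞ for all sufficiently large t, and this integral is asymptotically equivalent to t^α L(t) as t → ∞, i.e. (∫_{t}^{∞} L(u) (−α) u^{α−1} du) / (t^α L(t)) → 1 as t → ∞. -/
/-!
Write `h x = log L(eˣ)`, so that `h (x + u) - h x → 0` for every `u`. By convergence in measure,
for large `x` the set of `t ∈ [0, 2]` with `|h (x + t) - h x| ≥ ε / 2` has measure `< 1 / 2`;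
comparing these sets for `x` and `x + u` inside `[1, 2]` makes the convergence uniform in
`u ∈ [0, 1]` (the uniform convergence theorem). Chaining unit steps gives Potter's bound
`L(ts) / L(t) ≤ e^δ s^δ` for large `t` and `s ≥ 1`. After the substitution `u = ts`, the
integral divided by `t^α L(t)` is `∫_1^∞ L(ts)/L(t) (-α) s^(α-1) ds`; Potter's bound with
`δ = -α/2` supplies an integrable majorant, so by dominated convergence it tends to
`∫_1^∞ (-α) s^(α-1) ds = 1`.
-/

open MeasureTheory Filter Real Set

open Topology

section UniformConvergence

variable {h : ℝ → ℝ}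

theorem tendstoInMeasure_add_sub_of_tendsto (hmeas : Measurable h)
    (hlim : ∀ u, Tendsto (fun x => h (x + u) - h x) atTop (𝓝 0)) (a b : ℝ) :
    TendstoInMeasure (volume.restrict (Icc a b)) (fun x t => h (x + t) - h x) atTop 0 := by
  intro ε hε
  refine tendsto_iff_seq_tendsto.2 fun x hx => ?_
  refine tendstoInMeasure_of_tendsto_ae (fun n => ?_) (ae_of_all _ fun t => (hlim t).comp hx) ε hε
  exact ((hmeas.comp (measurable_const_add _)).sub_const _).aestronglyMeasurable

theorem eventually_forall_Icc_abs_add_sub_lt (hmeas : Measurable h)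
    (hlim : ∀ u, Tendsto (fun x => h (x + u) - h x) atTop (𝓝 0)) {ε : ℝ} (hε : 0 < ε) :
    ∀ᶠ x in atTop, ∀ u ∈ Icc (0 : ℝ) 1, |h (x + u) - h x| < ε := by
  set bad : ℝ → Set ℝ := fun x => {t | ENNReal.ofReal (ε / 2) ≤ edist (h (x + t) - h x) 0}
  have hsmall : ∀ᶠ x in atTop, volume.restrict (Icc 0 2) (bad x) < 1 / 2 :=
    (tendstoInMeasure_add_sub_of_tendsto hmeas hlim 0 2 _ (by simpa using hε)).eventually
      (gt_mem_nhds (by norm_num))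
  have hgood : ∀ {x t}, t ∉ bad x → |h (x + t) - h x| < ε / 2 := fun {x t} ht => by
    contrapose! ht
    simpa [bad, edist_dist] using ENNReal.ofReal_le_ofReal ht
  obtain ⟨X, hX⟩ := eventually_atTop.1 hsmall
  filter_upwards [eventually_ge_atTop X] with x hx u hu
  -- the two bad sets, each of measure `< 1 / 2`, cannot cover `[1, 2]`
  obtain ⟨t, -, htx, htxu⟩ : ∃ t ∈ Icc (1 : ℝ) 2, t ∉ bad x ∧ t - u ∉ bad (x + u) := by
    by_contra! hcover
    have hsub : Icc (1 : ℝ) 2 ⊆ (bad x ∩ Icc 0 2) ∪ (· - u) ⁻¹' (bad (x + u) ∩ Icc 0 2) := by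
      intro t ht
      by_cases htx : t ∈ bad x
      · exact Or.inl ⟨htx, by grind⟩
      · exact Or.inr ⟨hcover t ht htx, by grind⟩
    have := (measure_mono (μ := volume) hsub).trans (measure_union_le _ _)
    simp only [sub_eq_add_neg] at this
    rw [measure_preimage_add_right, Real.volume_Icc] at this
    have hlt := ENNReal.add_lt_add (hX x hx) (hX (x + u) (by linarith [hu.1]))
    rw [ENNReal.add_halves, Measure.restrict_apply' measurableSet_Icc,
      Measure.restrict_apply' measurableSet_Icc] at hlt
    norm_num at this
    exact (this.trans_lt hlt).false
  have h1 := hgood htx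
  have h2 := hgood htxu
  rw [add_add_sub_cancel] at h2
  calc |h (x + u) - h x| ≤ |h (x + t) - h (x + u)| + |h (x + t) - h x| := by
        rw [abs_sub_comm (h (x + t))]; exact abs_sub_le _ _ _
    _ < ε / 2 + ε / 2 := add_lt_add h2 h1
    _ = ε := add_halves ε

theorem le_add_mul_of_forall_Icc_le_add {X δ : ℝ}
    (hstep : ∀ x ≥ X, ∀ u ∈ Icc (0 : ℝ) 1, h (x + u) ≤ h x + δ) {x y : ℝ} (hx : X ≤ x)
    (hxy : x ≤ y) : h y ≤ h x + δ * (y - x + 1) := by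
  have hδ : 0 ≤ δ := by simpa using hstep X le_rfl 0 ⟨le_rfl, zero_le_one⟩
  have hnat : ∀ n : ℕ, ∀ y ∈ Icc x (x + n), h y ≤ h x + δ * n := by
    intro n
    induction n with
    | zero => intro y hy; simp [show y = x by simpa using hy]
    | succ n ih =>
      intro y ⟨hy₀, hy₁⟩
      push_cast at hy₁ ⊢
      rcases le_or_gt y (x + 1) with hy | hy
      · have hunit := hstep x hx (y - x) ⟨by linarith, by linarith⟩
        rw [add_sub_cancel] at hunit
        nlinarith [(Nat.cast_nonneg n : (0 : ℝ) ≤ n)]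
      · have hunit := hstep (y - 1) (by linarith) 1 ⟨zero_le_one, le_rfl⟩
        rw [sub_add_cancel] at hunit
        linarith [ih (y - 1) ⟨by linarith, by linarith⟩]
  have hceil := Nat.ceil_lt_add_one (sub_nonneg.2 hxy)
  have := hnat ⌈y - x⌉₊ y ⟨hxy, by linarith [Nat.le_ceil (y - x)]⟩
  nlinarith

end UniformConvergence

namespace SlowlyVaryingAtTop

variable {L : ℝ → ℝ}

theorem tendsto_log_comp_exp_add_sub_s2 (hL : SlowlyVaryingAtTop L) (hLpos : ∀ t > 0, 0 < L t)
    (u : ℝ) : Tendsto (fun x => log (L (exp (x + u))) - log (L (exp x))) atTop (𝓝 0) := by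
  have hratio := (hL (exp u) (exp_pos u)).comp tendsto_exp_atTop
  have hlog := ((continuousAt_log one_ne_zero).tendsto.comp hratio)
  rw [log_one] at hlog
  refine hlog.congr fun x => ?_
  simp only [Function.comp_apply, exp_add, mul_comm (exp x)]
  exact log_div (hLpos _ (by positivity)).ne' (hLpos _ (by positivity)).ne'

theorem eventually_div_le_exp_mul_rpow (hL : SlowlyVaryingAtTop L) (hLmeas : Measurable L)
    (hLpos : ∀ t > 0, 0 < L t) {δ : ℝ} (hδ : 0 < δ) :
    ∀ᶠ t in atTop, ∀ s ≥ 1, L (t * s) / L t ≤ exp δ * s ^ δ := by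
  set h : ℝ → ℝ := fun x => log (L (exp x))
  have hmeas : Measurable h := measurable_log.comp (hLmeas.comp measurable_exp)
  obtain ⟨X, hX⟩ := eventually_atTop.1 <|
    eventually_forall_Icc_abs_add_sub_lt hmeas (hL.tendsto_log_comp_exp_add_sub_s2 hLpos) hδ
  have hstep : ∀ x ≥ X, ∀ u ∈ Icc (0 : ℝ) 1, h (x + u) ≤ h x + δ := fun x hx u hu => by
    linarith [(abs_lt.1 (hX x hx u hu)).2]
  filter_upwards [tendsto_log_atTop.eventually_ge_atTop X, eventually_gt_atTop 0]
    with t hXt ht s hs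
  have hs0 : 0 < s := one_pos.trans_le hs
  have hts : log t ≤ log (t * s) := log_le_log ht (le_mul_of_one_le_right ht.le hs)
  have hpotter := le_add_mul_of_forall_Icc_le_add hstep hXt hts
  simp only [h, exp_log ht, exp_log (mul_pos ht hs0)] at hpotter
  rw [log_mul ht.ne' hs0.ne'] at hpotter
  rw [div_le_iff₀ (hLpos t ht), ← exp_log (hLpos _ (mul_pos ht hs0)),
    ← exp_log (hLpos t ht), rpow_def_of_pos hs0, ← exp_add, ← exp_add, exp_le_exp]
  linarith

variable {f : ℝ → ℝ} {δ : ℝ}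

theorem eventually_ae_norm_div_mul_le (hL : SlowlyVaryingAtTop L) (hLmeas : Measurable L)
    (hLpos : ∀ t > 0, 0 < L t) (hδ : 0 < δ) :
    ∀ᶠ t in atTop, ∀ᵐ s ∂volume.restrict (Ioi 1),
      ‖L (t * s) / L t * f s‖ ≤ exp δ * ‖s ^ δ * f s‖ := by
  filter_upwards [hL.eventually_div_le_exp_mul_rpow hLmeas hLpos hδ, eventually_gt_atTop 0]
    with t hpotter ht
  filter_upwards [ae_restrict_mem measurableSet_Ioi] with s (hs : 1 < s)
  have hs0 : 0 < s := one_pos.trans hs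
  rw [norm_mul, norm_mul, Real.norm_of_nonneg (div_nonneg (hLpos _ (mul_pos ht hs0)).le
    (hLpos t ht).le), Real.norm_of_nonneg (rpow_nonneg hs0.le δ), ← mul_assoc]
  exact mul_le_mul_of_nonneg_right (hpotter s hs.le) (norm_nonneg _)

theorem eventually_integrableOn_div_mul (hL : SlowlyVaryingAtTop L) (hLmeas : Measurable L)
    (hLpos : ∀ t > 0, 0 < L t) (hf : Measurable f) (hδ : 0 < δ)
    (hfδ : IntegrableOn (fun s => s ^ δ * f s) (Ioi 1)) :
    ∀ᶠ t in atTop, IntegrableOn (fun s => L (t * s) / L t * f s) (Ioi 1) := by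
  filter_upwards [hL.eventually_ae_norm_div_mul_le hLmeas hLpos hδ] with t hbound
  exact hfδ.norm.const_mul _ |>.mono'
    (((hLmeas.comp (measurable_const_mul t)).div_const _).mul hf).aestronglyMeasurable hbound

theorem tendsto_setIntegral_Ioi_one_div_mul (hL : SlowlyVaryingAtTop L) (hLmeas : Measurable L)
    (hLpos : ∀ t > 0, 0 < L t) (hf : Measurable f) (hδ : 0 < δ)
    (hfδ : IntegrableOn (fun s => s ^ δ * f s) (Ioi 1)) :
    Tendsto (fun t => ∫ s in Ioi 1, L (t * s) / L t * f s) atTop (𝓝 (∫ s in Ioi 1, f s)) := by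
  refine tendsto_integral_filter_of_dominated_convergence _
    (Eventually.of_forall fun t => (((hLmeas.comp (measurable_const_mul t)).div_const _).mul
      hf).aestronglyMeasurable) (hL.eventually_ae_norm_div_mul_le hLmeas hLpos hδ)
    (hfδ.norm.const_mul _) (ae_restrict_of_forall_mem measurableSet_Ioi fun s (hs : 1 < s) => ?_)
  have hratio := (hL s (one_pos.trans hs)).mul_const (f s)
  rw [one_mul] at hratio
  simpa only [mul_comm s] using hratio

end SlowlyVaryingAtTop

section PowerKernel

variable {L : ℝ → ℝ} {t : ℝ}

theorem mul_rpow_sub_one_comp_mul (c α : ℝ) (ht : 0 < t) (hLt : L t ≠ 0) {s : ℝ} (hs : 0 ≤ s) :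
    L (t * s) * (c * (t * s) ^ (α - 1)) =
      t ^ (α - 1) * L t * (L (t * s) / L t * (c * s ^ (α - 1))) := by
  rw [mul_rpow ht.le hs]
  field_simp

theorem integrableOn_Ioi_mul_rpow_of_integrableOn (c α : ℝ) (ht : 0 < t) (hLt : L t ≠ 0)
    (h : IntegrableOn (fun s => L (t * s) / L t * (c * s ^ (α - 1))) (Ioi 1)) :
    IntegrableOn (fun u => L u * (c * u ^ (α - 1))) (Ioi t) := by
  rw [← mul_one t, ← integrableOn_Ioi_comp_mul_left_iff _ _ ht]
  exact IntegrableOn.congr_fun (h.const_mul (t ^ (α - 1) * L t))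
    (fun s (hs : 1 < s) => (mul_rpow_sub_one_comp_mul c α ht hLt (by linarith)).symm)
    measurableSet_Ioi

theorem setIntegral_Ioi_mul_rpow_eq (c α : ℝ) (ht : 0 < t) (hLt : L t ≠ 0) :
    ∫ u in Ioi t, L u * (c * u ^ (α - 1)) =
      t ^ α * L t * ∫ s in Ioi 1, L (t * s) / L t * (c * s ^ (α - 1)) := by
  rw [← mul_one t, ← integral_comp_mul_left_Ioi' _ _ ht, mul_one,
    setIntegral_congr_fun measurableSet_Ioi
      fun s (hs : 1 < s) => mul_rpow_sub_one_comp_mul c α ht hLt (by linarith),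
    integral_const_mul, smul_eq_mul, rpow_sub_one ht.ne']
  generalize ∫ s in Ioi 1, L (t * s) / L t * (c * s ^ (α - 1)) = I
  field_simp

theorem integral_Ioi_one_neg_mul_rpow_sub_one {α : ℝ} (hα : α < 0) :
    ∫ s in Ioi 1, -α * s ^ (α - 1) = 1 := by
  rw [integral_const_mul, integral_Ioi_rpow_of_lt (by linarith) one_pos, one_rpow, sub_add_cancel]
  field_simp
  exact div_self hα.ne

end PowerKernel

/-- Karamata: if `L` is slowly varying at `∞` and `α < 0`, then for all sufficiently large `t`
the integral `∫_t^∞ L(u) (-α) u^{α-1} du` is finite, and it is asymptotically equivalent to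
`t^α L(t)` as `t → ∞`. -/
theorem stmt_2 (L : ℝ → ℝ) (hLmeas : Measurable L) (hLpos : ∀ t > 0, 0 < L t)
    (hL : SlowlyVaryingAtTop L) (α : ℝ) (hα : α < 0) :
    (∀ᶠ t in Filter.atTop,
      MeasureTheory.IntegrableOn (fun u => L u * (-α * u ^ (α - 1))) (Set.Ioi t)) ∧
    Filter.Tendsto
      (fun t => (∫ u in Set.Ioi t, L u * (-α * u ^ (α - 1))) / (t ^ α * L t))
      Filter.atTop (nhds 1) := by
  have hδ : 0 < -α / 2 := by linarith
  have hf : Measurable fun s : ℝ => -α * s ^ (α - 1) := by fun_prop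
  have hfδ : IntegrableOn (fun s : ℝ => s ^ (-α / 2) * (-α * s ^ (α - 1))) (Ioi 1) := by
    refine IntegrableOn.congr_fun ((integrableOn_Ioi_rpow_of_lt (a := α - 1 + -α / 2)
      (by linarith) one_pos).const_mul (-α)) (fun s (hs : 1 < s) => ?_) measurableSet_Ioi
    rw [rpow_add (one_pos.trans hs)]
    ring
  constructor
  · filter_upwards [hL.eventually_integrableOn_div_mul hLmeas hLpos hf hδ hfδ,
      eventually_gt_atTop 0] with t hint ht
    exact integrableOn_Ioi_mul_rpow_of_integrableOn _ _ ht (hLpos t ht).ne' hint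
  · have hlim := hL.tendsto_setIntegral_Ioi_one_div_mul hLmeas hLpos hf hδ hfδ
    rw [integral_Ioi_one_neg_mul_rpow_sub_one hα] at hlim
    refine hlim.congr' ?_
    filter_upwards [eventually_gt_atTop 0] with t ht
    rw [setIntegral_Ioi_mul_rpow_eq _ _ ht (hLpos t ht).ne', mul_div_cancel_left₀]
    exact mul_ne_zero (rpow_pos_of_pos ht α).ne' (hLpos t ht).ne'
end

section
/- Let l : (0,∞) → (0,∞) be slowly varying at 0 and let s₀ ∈ (0,∞) be such that l is bounded on every compact subset of (0, s₀]. If α < 0, then ∫_{s}^{s₀} l(u) (−α) u^{α−1} du is asymptotically equivalent to s^α l(s) as s → 0+, i.e. (∫_{s}^{s₀} l(u) (−α) u^{α−1} du) / (s^α l(s)) → 1 as s → 0+. -/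
/-!
For a small `t₀ ≤ s₀`, substituting `u = v s` turns
`∫_s^{t₀} l(u) (-α) u^{α-1} du / (s^α l(s))` into `∫_1^{t₀/s} (l(v s)/l(s)) (-α) v^{α-1} dv`,
whose integrand tends to `-α v^{α-1}`, an integrand of total mass `1` on `(1, ∞)`. Potter's bound `l(v s)/l(s) ≤ e^ε v^ε` (with `ε = -α/2`), which
follows from the uniform convergence theorem for slowly varying functions, gives an integrable
majorant, so dominated convergence applies; it also shows `s^α l(s) → ∞`, so the remaining
integral over `(t₀, s₀]`, finite by local boundedness, is negligible.
-/

open MeasureTheory Filter Real Set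

/-- `l : (0,∞) → (0,∞)` is slowly varying at `0`: for every `u > 0`,
`l(ut)/l(t) → 1` as `t → 0+`. -/
def SlowlyVaryingAtZero (l : ℝ → ℝ) : Prop :=
  ∀ u : ℝ, 0 < u →
    Filter.Tendsto (fun t => l (u * t) / l t) (nhdsWithin 0 (Set.Ioi 0)) (nhds 1)

open scoped Topology

section UniformConvergence

variable {k : ℝ → ℝ}

lemma tendsto_measure_setOf_le_abs_add_sub (hk : Measurable k)
    (hlim : ∀ s, Tendsto (fun x => k (x + s) - k x) atTop (𝓝 0)) {δ : ℝ} (hδ : 0 < δ)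
    (μ : Measure ℝ) [IsFiniteMeasure μ] :
    Tendsto (fun x => μ {t | δ ≤ |k (x + t) - k x|}) atTop (𝓝 0) := by
  have hmeas : ∀ x, MeasurableSet {t | δ ≤ |k (x + t) - k x|} := fun x =>
    measurableSet_le measurable_const
      ((hk.comp (measurable_const.add measurable_id)).sub measurable_const).abs
  simpa using tendsto_measure_of_ae_tendsto_indicator_of_isFiniteMeasure atTop
    MeasurableSet.empty hmeas (ae_of_all μ fun t =>
      ((hlim t).abs.eventually (gt_mem_nhds (by simpa using hδ))).mono fun x hx => by
        simpa using hx)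

/-- Csiszár–Erdős: the sets where `k (x + ·) - k x` is large have measure tending to `0`, so two
of them cannot cover an interval of length `2`. -/
lemma eventually_forall_Icc_abs_add_sub_le (hk : Measurable k)
    (hlim : ∀ s, Tendsto (fun x => k (x + s) - k x) atTop (𝓝 0)) {ε : ℝ} (hε : 0 < ε) :
    ∀ᶠ x in atTop, ∀ s ∈ Icc (0 : ℝ) 1, |k (x + s) - k x| ≤ ε := by
  set μ := volume.restrict (Icc (-1 : ℝ) 2)
  set E : ℝ → Set ℝ := fun x => {t | ε / 2 ≤ |k (x + t) - k x|}
  have hsmall : ∀ᶠ x in atTop, μ (E x) < 1 :=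
    (tendsto_measure_setOf_le_abs_add_sub hk hlim (half_pos hε) μ).eventually
      (gt_mem_nhds one_pos)
  obtain ⟨X, hX⟩ := eventually_atTop.mp hsmall
  filter_upwards [eventually_ge_atTop X] with x hx s hs
  by_contra! hbig
  have hcover : Icc (0 : ℝ) 2 ⊆ (E x ∩ Icc (-1) 2) ∪
      (fun t => t + -s) ⁻¹' (E (x + s) ∩ Icc (-1) 2) := by
    intro t ht
    by_cases htx : ε / 2 ≤ |k (x + t) - k x|
    · exact Or.inl ⟨htx, by linarith [ht.1], ht.2⟩
    · refine Or.inr ⟨?_, by linarith [ht.1, hs.2], by linarith [ht.2, hs.1]⟩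
      have hxt : x + s + (t + -s) = x + t := by ring
      simp only [E, mem_ofPred_eq, hxt]
      have := abs_sub_le (k (x + s)) (k (x + t)) (k x)
      rw [abs_sub_comm (k (x + s)) (k (x + t))] at this
      linarith
  have h2 : (2 : ENNReal) ≤ μ (E x) + μ (E (x + s)) := by
    calc (2 : ENNReal) = volume (Icc (0 : ℝ) 2) := by simp [Real.volume_Icc]
      _ ≤ volume (E x ∩ Icc (-1) 2) + volume ((fun t => t + -s) ⁻¹' (E (x + s) ∩ Icc (-1) 2)) :=
        (measure_mono hcover).trans (measure_union_le _ _)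
      _ = μ (E x) + μ (E (x + s)) := by
        rw [measure_preimage_add_right, Measure.restrict_apply' measurableSet_Icc,
          Measure.restrict_apply' measurableSet_Icc]
  have hlt := ENNReal.add_lt_add (hX x hx) (hX (x + s) (by linarith [hs.1]))
  norm_num at hlt
  exact not_le.mpr hlt h2

lemma abs_add_sub_le_mul_add_one {X ε : ℝ} (hε : 0 ≤ ε)
    (h : ∀ x ≥ X, ∀ s ∈ Icc (0 : ℝ) 1, |k (x + s) - k x| ≤ ε) :
    ∀ x ≥ X, ∀ s ≥ 0, |k (x + s) - k x| ≤ ε * (s + 1) := by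
  have hnat : ∀ n : ℕ, ∀ x ≥ X, ∀ s ∈ Icc (0 : ℝ) n, |k (x + s) - k x| ≤ ε * n := by
    intro n
    induction n with
    | zero =>
      intro x _ s hs
      obtain rfl : s = 0 := le_antisymm (by simpa using hs.2) hs.1
      simp
    | succ n ih =>
      intro x hx s hs
      push_cast at hs ⊢
      rcases le_or_gt s 1 with hs1 | hs1
      · have := h x hx s ⟨hs.1, hs1⟩
        nlinarith [(Nat.cast_nonneg n : (0 : ℝ) ≤ n)]
      · have h1 := h x hx 1 ⟨zero_le_one, le_rfl⟩
        have h2 := ih (x + 1) (by linarith) (s - 1) ⟨by linarith, by linarith [hs.2]⟩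
        rw [show x + 1 + (s - 1) = x + s by ring] at h2
        calc |k (x + s) - k x| ≤ |k (x + s) - k (x + 1)| + |k (x + 1) - k x| := abs_sub_le _ _ _
          _ ≤ ε * (n + 1) := by linarith
  intro x hx s hs
  calc |k (x + s) - k x| ≤ ε * ⌈s⌉₊ := hnat ⌈s⌉₊ x hx s ⟨hs, Nat.le_ceil s⟩
    _ ≤ ε * (s + 1) := mul_le_mul_of_nonneg_left (Nat.ceil_lt_add_one hs).le hε

end UniformConvergence

namespace SlowlyVaryingAtZero

variable {l : ℝ → ℝ}

lemma tendsto_log_comp_exp_neg (hl : SlowlyVaryingAtZero l) (hlpos : ∀ t > 0, 0 < l t) (s : ℝ) :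
    Tendsto (fun x => log (l (exp (-(x + s)))) - log (l (exp (-x)))) atTop (𝓝 0) := by
  have hexp : Tendsto (fun x : ℝ => exp (-x)) atTop (𝓝[>] 0) :=
    tendsto_exp_atBot_nhdsGT.comp tendsto_neg_atTop_atBot
  have := ((continuousAt_log one_ne_zero).tendsto.comp
    ((hl (exp (-s)) (exp_pos _)).comp hexp))
  rw [log_one] at this
  refine this.congr fun x => ?_
  rw [Function.comp_apply, Function.comp_apply, ← exp_add, neg_add_rev,
    log_div (hlpos _ (exp_pos _)).ne' (hlpos _ (exp_pos _)).ne']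

lemma eventually_div_le_exp_mul_rpow (hl : SlowlyVaryingAtZero l) (hlmeas : Measurable l)
    (hlpos : ∀ t > 0, 0 < l t) {ε : ℝ} (hε : 0 < ε) :
    ∀ᶠ t₀ in 𝓝[>] 0, ∀ t > 0, ∀ u ≥ 1, u * t ≤ t₀ → l (u * t) / l t ≤ exp ε * u ^ ε := by
  set k : ℝ → ℝ := fun x => log (l (exp (-x)))
  have hk : Measurable k := measurable_log.comp (hlmeas.comp (measurable_exp.comp measurable_neg))
  obtain ⟨X, hX⟩ := eventually_atTop.mp
    (eventually_forall_Icc_abs_add_sub_le hk (hl.tendsto_log_comp_exp_neg hlpos) hε)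
  have hpotter := abs_add_sub_le_mul_add_one hε.le hX
  filter_upwards [Ioc_mem_nhdsGT (exp_pos (-X))] with t₀ ht₀ t ht u hu hut
  have hu0 : 0 < u := one_pos.trans_le hu
  have hut0 : 0 < u * t := mul_pos hu0 ht
  have hxX : X ≤ -log (u * t) := by
    have := log_le_log hut0 (hut.trans ht₀.2)
    rw [log_exp] at this
    linarith
  have hbound := hpotter _ hxX (log u) (log_nonneg hu)
  have hkx : k (-log (u * t)) = log (l (u * t)) := by simp only [k, neg_neg, exp_log hut0]
  have hkxs : k (-log (u * t) + log u) = log (l t) := by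
    simp only [k, log_mul hu0.ne' ht.ne', neg_add, neg_neg, add_neg_cancel_comm, exp_log ht]
  rw [hkx, hkxs, abs_sub_comm, ← log_div (hlpos _ hut0).ne' (hlpos t ht).ne'] at hbound
  calc l (u * t) / l t = exp (log (l (u * t) / l t)) :=
        (exp_log (div_pos (hlpos _ hut0) (hlpos t ht))).symm
    _ ≤ exp (ε * (log u + 1)) := exp_le_exp.mpr (le_abs_self _ |>.trans hbound)
    _ = exp ε * u ^ ε := by rw [rpow_def_of_pos hu0, ← exp_add]; ring_nf

end SlowlyVaryingAtZero

lemma integrableOn_Icc_mul_rpow {l : ℝ → ℝ} (hlmeas : Measurable l) {a b M : ℝ} (ha : 0 < a)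
    (hM : ∀ t ∈ Icc a b, ‖l t‖ ≤ M) (c β : ℝ) :
    IntegrableOn (fun u => l u * (c * u ^ β)) (Icc a b) := by
  refine IntegrableOn.mul_continuousOn ?_ ?_ isCompact_Icc
  · exact Measure.integrableOn_of_bounded measure_Icc_lt_top.ne hlmeas.aestronglyMeasurable
      ((ae_restrict_mem measurableSet_Icc).mono hM)
  · exact continuousOn_const.mul
      (continuousOn_id.rpow_const fun u hu => Or.inl (ha.trans_le hu.1).ne')

lemma integral_Ioc_mul_rpow_eq (l : ℝ → ℝ) (c β : ℝ) {s t : ℝ} (hs : 0 < s) (hst : s ≤ t)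
    (hls : l s ≠ 0) :
    ∫ u in Ioc s t, l u * (c * u ^ (β - 1)) =
      s ^ β * l s * ∫ v in Ioc 1 (t / s), l (v * s) / l s * (c * v ^ (β - 1)) := by
  have hscale := intervalIntegral.integral_comp_mul_right (fun u => l u * (c * u ^ (β - 1)))
    (a := 1) (b := t / s) hs.ne'
  rw [one_mul, div_mul_cancel₀ _ hs.ne', smul_eq_mul] at hscale
  rw [← intervalIntegral.integral_of_le hst, ← intervalIntegral.integral_of_le
    ((one_le_div hs).mpr hst), ← intervalIntegral.integral_const_mul,
    ← mul_inv_cancel_left₀ hs.ne' (∫ u in s..t, _), ← hscale, ← intervalIntegral.integral_const_mul]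
  refine intervalIntegral.integral_congr fun v hv => ?_
  have hv : 0 ≤ v := zero_le_one.trans (by simpa [(one_le_div hs).mpr hst] using hv.1)
  simp only [mul_rpow hv hs.le, rpow_sub hs, rpow_one]
  field_simp

section PotterBound

variable {l : ℝ → ℝ} {α ε t₀ : ℝ}

lemma tendsto_rpow_mul_atTop (hlpos : ∀ t > 0, 0 < l t) (ht₀ : 0 < t₀)
    (hpot : ∀ t > 0, ∀ u ≥ 1, u * t ≤ t₀ → l (u * t) / l t ≤ exp ε * u ^ ε)
    (hαε : α + ε < 0) :
    Tendsto (fun s => s ^ α * l s) (𝓝[>] 0) atTop := by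
  have hc : 0 < l t₀ / (exp ε * t₀ ^ ε) := by have := hlpos t₀ ht₀; positivity
  refine tendsto_atTop_mono' _ ?_ ((tendsto_rpow_neg_nhdsGT_zero hαε).const_mul_atTop hc)
  filter_upwards [Ioc_mem_nhdsGT ht₀] with s ⟨hs, hst₀⟩
  have hbound := hpot s hs (t₀ / s) ((one_le_div hs).mpr hst₀) (div_mul_cancel₀ _ hs.ne').le
  rw [div_mul_cancel₀ _ hs.ne', div_rpow ht₀.le hs.le, div_le_iff₀ (hlpos s hs)] at hbound
  rw [rpow_add hs, div_mul_eq_mul_div, div_le_iff₀ (by positivity)]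
  calc l t₀ * (s ^ α * s ^ ε) = s ^ α * s ^ ε * l t₀ := by ring
    _ ≤ s ^ α * s ^ ε * (exp ε * (t₀ ^ ε / s ^ ε) * l s) := by gcongr
    _ = s ^ α * l s * (exp ε * t₀ ^ ε) := by field_simp

lemma integral_Ioi_one_neg_mul_rpow (hα : α < 0) : ∫ v in Ioi (1 : ℝ), -α * v ^ (α - 1) = 1 := by
  rw [integral_const_mul, integral_Ioi_rpow_of_lt (by linarith) one_pos, one_rpow, sub_add_cancel]
  field_simp [hα.ne]

lemma tendsto_integral_Ioc_div_mul_rpow (hl : SlowlyVaryingAtZero l) (hlmeas : Measurable l)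
    (hlpos : ∀ t > 0, 0 < l t) (ht₀ : 0 < t₀)
    (hpot : ∀ t > 0, ∀ u ≥ 1, u * t ≤ t₀ → l (u * t) / l t ≤ exp ε * u ^ ε)
    (hα : α < 0) (hαε : α + ε < 0) :
    Tendsto (fun s => ∫ v in Ioc 1 (t₀ / s), l (v * s) / l s * (-α * v ^ (α - 1)))
      (𝓝[>] 0) (𝓝 1) := by
  set F : ℝ → ℝ → ℝ := fun s => (Ioc 1 (t₀ / s)).indicator
    fun v => l (v * s) / l s * (-α * v ^ (α - 1))
  have hF : ∀ s, ∫ v in Ioc 1 (t₀ / s), l (v * s) / l s * (-α * v ^ (α - 1)) =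
      ∫ v in Ioi 1, F s v := fun s => by
    rw [integral_indicator measurableSet_Ioc, Measure.restrict_restrict measurableSet_Ioc,
      inter_eq_left.mpr Ioc_subset_Ioi_self]
  suffices Tendsto (fun s => ∫ v in Ioi 1, F s v) (𝓝[>] 0)
      (𝓝 (∫ v in Ioi 1, -α * v ^ (α - 1))) by
    rw [integral_Ioi_one_neg_mul_rpow hα] at this
    exact this.congr fun s => (hF s).symm
  refine tendsto_integral_filter_of_dominated_convergence
    (fun v => exp ε * -α * v ^ (ε + α - 1)) (Eventually.of_forall fun s => ?_) ?_ ?_ ?_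
  · refine (Measurable.indicator (Measurable.mul ?_ ?_) measurableSet_Ioc).aestronglyMeasurable
    · exact (hlmeas.comp (measurable_id.mul_const s)).div_const _
    · exact measurable_const.mul (measurable_id.pow_const _)
  · filter_upwards [self_mem_nhdsWithin] with s (hs : 0 < s)
    filter_upwards [ae_restrict_mem measurableSet_Ioi] with v (hv : 1 < v)
    have hv0 : 0 < v := one_pos.trans hv
    have hα' : 0 < -α := neg_pos.mpr hα
    by_cases hmem : v ∈ Ioc 1 (t₀ / s)
    · have := hlpos _ (mul_pos hv0 hs)
      have := hlpos s hs
      simp only [F, indicator_of_mem hmem]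
      rw [norm_of_nonneg (by positivity)]
      calc l (v * s) / l s * (-α * v ^ (α - 1))
          ≤ exp ε * v ^ ε * (-α * v ^ (α - 1)) := by
            gcongr
            exact hpot s hs v hv.le ((le_div_iff₀ hs).mp hmem.2)
        _ = exp ε * -α * v ^ (ε + α - 1) := by
            rw [show ε + α - 1 = ε + (α - 1) by ring, rpow_add hv0]; ring
    · simp only [F, indicator_of_notMem hmem, norm_zero]
      positivity
  · exact (integrableOn_Ioi_rpow_of_lt (by linarith) one_pos).const_mul _
  · filter_upwards [ae_restrict_mem measurableSet_Ioi] with v (hv : 1 < v)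
    have hv0 : 0 < v := one_pos.trans hv
    have hF : ∀ᶠ s in 𝓝[>] 0, l (v * s) / l s * (-α * v ^ (α - 1)) = F s v := by
      filter_upwards [Ioo_mem_nhdsGT (div_pos ht₀ hv0)] with s ⟨hs, hsv⟩
      refine (indicator_of_mem (show v ∈ Ioc 1 (t₀ / s) from ⟨hv, ?_⟩)
        fun v => l (v * s) / l s * (-α * v ^ (α - 1))).symm
      rw [le_div_iff₀ hs, mul_comm]
      exact ((lt_div_iff₀ hv0).mp hsv).le
    simpa using ((hl v hv0).mul_const (-α * v ^ (α - 1))).congr' hF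

end PotterBound

/-- If `l` is slowly varying at `0` and locally bounded on `(0, s₀]`, and `α < 0`, then
`∫_s^{s₀} l(u) (-α) u^{α-1} du ∼ s^α l(s)` as `s → 0+`. -/
theorem stmt_3 (l : ℝ → ℝ) (hlmeas : Measurable l) (hlpos : ∀ t > 0, 0 < l t)
    (hl : SlowlyVaryingAtZero l) (s₀ : ℝ) (hs₀ : 0 < s₀)
    (hbdd : ∀ K : Set ℝ, IsCompact K → K ⊆ Set.Ioc 0 s₀ → ∃ M : ℝ, ∀ t ∈ K, l t ≤ M)
    (α : ℝ) (hα : α < 0) :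
    Filter.Tendsto
      (fun s => (∫ u in Set.Ioc s s₀, l u * (-α * u ^ (α - 1))) / (s ^ α * l s))
      (nhdsWithin 0 (Set.Ioi 0)) (nhds 1) := by
  have hαε : α + -α / 2 < 0 := by linarith
  obtain ⟨t₀, hpot, ht₀, ht₀s₀⟩ := ((hl.eventually_div_le_exp_mul_rpow hlmeas hlpos
    (ε := -α / 2) (by linarith)).and (Ioc_mem_nhdsGT hs₀)).exists
  have hint : ∀ s > 0, IntegrableOn (fun u => l u * (-α * u ^ (α - 1))) (Ioc s s₀) := by
    intro s hs
    obtain ⟨M, hM⟩ := hbdd (Icc s s₀) isCompact_Icc fun t ht => ⟨hs.trans_le ht.1, ht.2⟩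
    refine (integrableOn_Icc_mul_rpow hlmeas hs (M := M) (fun t ht => ?_) _ _).mono_set
      Ioc_subset_Icc_self
    rw [norm_of_nonneg (hlpos t (hs.trans_le ht.1)).le]
    exact hM t ht
  set C := ∫ u in Ioc t₀ s₀, l u * (-α * u ^ (α - 1))
  have hsplit : ∀ᶠ s in 𝓝[>] 0,
      (∫ v in Ioc 1 (t₀ / s), l (v * s) / l s * (-α * v ^ (α - 1))) + C / (s ^ α * l s) =
        (∫ u in Ioc s s₀, l u * (-α * u ^ (α - 1))) / (s ^ α * l s) := by
    filter_upwards [Ioo_mem_nhdsGT ht₀] with s ⟨hs, hst₀⟩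
    have hD : s ^ α * l s ≠ 0 := (mul_pos (rpow_pos_of_pos hs α) (hlpos s hs)).ne'
    rw [← Ioc_union_Ioc_eq_Ioc hst₀.le ht₀s₀, setIntegral_union (Ioc_disjoint_Ioc_of_le le_rfl)
      measurableSet_Ioc ((hint s hs).mono_set (Ioc_subset_Ioc_right ht₀s₀)) (hint t₀ ht₀),
      integral_Ioc_mul_rpow_eq l _ _ hs hst₀.le (hlpos s hs).ne', add_div,
      mul_div_cancel_left₀ _ hD]
  simpa using ((tendsto_integral_Ioc_div_mul_rpow hl hlmeas hlpos ht₀ hpot hα hαε).add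
    (tendsto_const_nhds.div_atTop (tendsto_rpow_mul_atTop hlpos ht₀ hpot hαε))).congr' hsplit
end

section
/- Let (E, ℰ) be a measurable space, ρ a finite nonzero measure on (E, ℰ), and α : E → ℝ a bounded measurable function whose essential infimum α₀ := sup{ r ∈ ℝ : ρ({x : α(x) < r}) = 0 } is a real number. Then the function t ↦ ∫_E t^{α(x)} ρ(dx) on (0,∞) is regularly varying at 0 with index α₀, i.e. for every u > 0, (∫_E (ut)^{α(x)} ρ(dx)) / (∫_E t^{α(x)} ρ(dx)) → u^{α₀} as t → 0+. -/
open MeasureTheory Filter Real Set Topology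

/-!
Writing `α = α₀ + β` with `β ≥ 0` a.e. factors `t ^ α₀` out of both integrals, so it suffices to
show that `I(t) = ∫ t ^ β dρ` satisfies `I(u t) / I(t) → 1`. Split `E` at a level `δ > 0`: where
`β ≤ δ` the integrands of `I(u t)` and `I(t)` differ by a factor within `|u ^ δ - 1|` of `1`, and the
part where `β > δ` is `O(t ^ δ)`. Since `ρ {β < δ / 2} > 0` by the definition of `α₀`, we have
`I(t) ≥ c t ^ (δ / 2)`, so that part is negligible relative to `I(t)` as `t → 0+`.
-/

lemma abs_rpow_sub_one_le_of_le {u b d : ℝ} (hu : 0 < u) (hb : 0 ≤ b) (hbd : b ≤ d) :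
    |u ^ b - 1| ≤ |u ^ d - 1| := by
  rcases le_total u 1 with hu1 | hu1
  · have hdb : u ^ d ≤ u ^ b := rpow_le_rpow_of_exponent_ge hu hu1 hbd
    have hb1 : u ^ b ≤ 1 := rpow_le_one hu.le hu1 hb
    rw [abs_of_nonpos (by linarith), abs_of_nonpos (by linarith)]
    linarith
  · have hbd' : u ^ b ≤ u ^ d := rpow_le_rpow_of_exponent_le hu1 hbd
    have hb1 : 1 ≤ u ^ b := one_le_rpow hu1 hb
    rw [abs_of_nonneg (by linarith), abs_of_nonneg (by linarith)]
    linarith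

lemma abs_rpow_sub_one_mul_rpow_le {u t b δ M : ℝ} (hu : 0 < u) (ht : 0 < t) (ht1 : t ≤ 1)
    (hb : 0 ≤ b) (hbM : b ≤ M) :
    |u ^ b - 1| * t ^ b ≤ |u ^ δ - 1| * t ^ b + |u ^ M - 1| * t ^ δ := by
  rcases le_total b δ with hbδ | hδb
  · have := mul_le_mul_of_nonneg_right (abs_rpow_sub_one_le_of_le hu hb hbδ)
      (rpow_nonneg ht.le b)
    have : 0 ≤ |u ^ M - 1| * t ^ δ := by positivity
    linarith
  · have := mul_le_mul (abs_rpow_sub_one_le_of_le hu hb hbM)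
      (rpow_le_rpow_of_exponent_ge ht ht1 hδb) (by positivity) (abs_nonneg _)
    have : 0 ≤ |u ^ δ - 1| * t ^ b := by positivity
    linarith

section IsLUB

variable {E : Type*} [MeasurableSpace E] {ρ : Measure E} {α : E → ℝ} {α₀ : ℝ}

lemma ae_le_of_isLUB_measure_lt_eq_zero (h : IsLUB {r : ℝ | ρ {x | α x < r} = 0} α₀) :
    ∀ᵐ x ∂ρ, α₀ ≤ α x := by
  have hq : ∀ᵐ x ∂ρ, ∀ q : {q : ℚ // (q : ℝ) < α₀}, (q : ℝ) ≤ α x := by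
    refine ae_all_iff.2 fun ⟨q, hq⟩ => ?_
    obtain ⟨s, hs, hqs, -⟩ := h.exists_between hq
    have hnull : ρ {x | α x < s} = 0 := hs
    filter_upwards [measure_eq_zero_iff_ae_notMem.1 hnull] with x hx
    simp only [not_lt] at hx
    exact hqs.le.trans hx
  filter_upwards [hq] with x hx
  by_contra! hlt
  obtain ⟨q, hxq, hq⟩ := exists_rat_btwn hlt
  exact (hx ⟨q, hq⟩).not_gt hxq

lemma measure_lt_add_ne_zero_of_isLUB (h : IsLUB {r : ℝ | ρ {x | α x < r} = 0} α₀) {ε : ℝ}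
    (hε : 0 < ε) : ρ {x | α x < α₀ + ε} ≠ 0 := fun hnull => by
  linarith [h.1 hnull]

end IsLUB

section RpowIntegral

variable {E : Type*} [MeasurableSpace E] {ρ : Measure E} {β : E → ℝ}

lemma integral_rpow_eq_rpow_mul_integral_rpow_sub {s : ℝ} (hs : 0 < s) (c : ℝ) :
    ∫ x, s ^ β x ∂ρ = s ^ c * ∫ x, s ^ (β x - c) ∂ρ := by
  rw [← integral_const_mul]
  congr 1 with x
  rw [← rpow_add hs, add_sub_cancel]

variable [IsFiniteMeasure ρ] {M : ℝ}

lemma integrable_rpow_of_abs_le (hβ : Measurable β) (hM : ∀ x, |β x| ≤ M) {t : ℝ} (ht : 0 < t) :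
    Integrable (fun x => t ^ β x) ρ := by
  refine Integrable.of_bound (measurable_const.pow hβ).aestronglyMeasurable (max (t ^ M) (t ^ (-M))) (ae_of_all _ fun x => ?_)
  rw [norm_of_nonneg (rpow_nonneg ht.le _)]
  obtain ⟨hlo, hhi⟩ := abs_le.1 (hM x)
  rcases le_total t 1 with ht1 | ht1
  · exact le_max_of_le_right (rpow_le_rpow_of_exponent_ge ht ht1 hlo)
  · exact le_max_of_le_left (rpow_le_rpow_of_exponent_le ht1 hhi)

lemma measureReal_mul_rpow_le_integral_rpow (hβ : Measurable β) (hM : ∀ x, |β x| ≤ M)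
    {t : ℝ} (ht : 0 < t) (ht1 : t ≤ 1) (δ : ℝ) :
    ρ.real {x | β x < δ} * t ^ δ ≤ ∫ x, t ^ β x ∂ρ := by
  have hint := integrable_rpow_of_abs_le (ρ := ρ) hβ hM ht
  calc ρ.real {x | β x < δ} * t ^ δ = ∫ _ in {x | β x < δ}, t ^ δ ∂ρ := by
        rw [setIntegral_const, smul_eq_mul]
    _ ≤ ∫ x in {x | β x < δ}, t ^ β x ∂ρ :=
        setIntegral_mono_on (integrable_const _).integrableOn hint.integrableOn
          (hβ measurableSet_Iio) fun x hx => rpow_le_rpow_of_exponent_ge ht ht1 (le_of_lt hx)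
    _ ≤ ∫ x, t ^ β x ∂ρ :=
        setIntegral_le_integral hint (ae_of_all _ fun x => rpow_nonneg ht.le _)

variable (hβ : Measurable β) (hM : ∀ x, |β x| ≤ M) (h0 : ∀ᵐ x ∂ρ, 0 ≤ β x)
  {u : ℝ} (hu : 0 < u)
include hβ hM h0 hu

lemma abs_integral_rpow_mul_sub_le {t : ℝ} (ht : 0 < t) (ht1 : t ≤ 1) (δ : ℝ) :
    |(∫ x, (u * t) ^ β x ∂ρ) - ∫ x, t ^ β x ∂ρ|
      ≤ |u ^ δ - 1| * (∫ x, t ^ β x ∂ρ) + |u ^ M - 1| * ρ.real univ * t ^ δ := by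
  have hint := integrable_rpow_of_abs_le (ρ := ρ) hβ hM ht
  have hint_u := integrable_rpow_of_abs_le (ρ := ρ) hβ hM (mul_pos hu ht)
  calc |(∫ x, (u * t) ^ β x ∂ρ) - ∫ x, t ^ β x ∂ρ|
      ≤ ∫ x, |(u * t) ^ β x - t ^ β x| ∂ρ := by
        rw [← integral_sub hint_u hint]
        exact abs_integral_le_integral_abs
    _ ≤ ∫ x, (|u ^ δ - 1| * t ^ β x + |u ^ M - 1| * t ^ δ) ∂ρ := by
        refine integral_mono_ae (hint_u.sub hint).abs
          ((hint.const_mul _).add (integrable_const _)) ?_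
        filter_upwards [h0] with x hx
        rw [mul_rpow hu.le ht.le, ← sub_one_mul, abs_mul, abs_of_nonneg (rpow_nonneg ht.le _)]
        exact abs_rpow_sub_one_mul_rpow_le hu ht ht1 hx (abs_le.1 (hM x)).2
    _ = |u ^ δ - 1| * (∫ x, t ^ β x ∂ρ) + |u ^ M - 1| * ρ.real univ * t ^ δ := by
        rw [integral_add (hint.const_mul _) (integrable_const _), integral_const_mul,
          integral_const, smul_eq_mul]
        ring

lemma abs_integral_rpow_mul_div_sub_one_le {t δ : ℝ} (ht : 0 < t) (ht1 : t ≤ 1)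
    (hδ : 0 < ρ.real {x | β x < δ / 2}) :
    |(∫ x, (u * t) ^ β x ∂ρ) / (∫ x, t ^ β x ∂ρ) - 1|
      ≤ |u ^ δ - 1| + |u ^ M - 1| * ρ.real univ / ρ.real {x | β x < δ / 2} * t ^ (δ / 2) := by
  set I := ∫ x, t ^ β x ∂ρ
  set a := ρ.real {x | β x < δ / 2}
  set K := |u ^ M - 1| * ρ.real univ
  have hlow : a * t ^ (δ / 2) ≤ I := measureReal_mul_rpow_le_integral_rpow hβ hM ht ht1 _
  have htδ : 0 < t ^ (δ / 2) := rpow_pos_of_pos ht _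
  have hI : 0 < I := (mul_pos hδ htδ).trans_le hlow
  calc |(∫ x, (u * t) ^ β x ∂ρ) / I - 1| = |(∫ x, (u * t) ^ β x ∂ρ) - I| / I := by
        rw [div_sub_one hI.ne', abs_div, abs_of_pos hI]
    _ ≤ (|u ^ δ - 1| * I + K * t ^ δ) / I := by
        gcongr
        exact abs_integral_rpow_mul_sub_le hβ hM h0 hu ht ht1 δ
    _ = |u ^ δ - 1| + K * t ^ δ / I := by
        rw [add_div, mul_div_assoc, div_self hI.ne', mul_one]
    _ ≤ |u ^ δ - 1| + K * t ^ δ / (a * t ^ (δ / 2)) := by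
        gcongr
    _ = |u ^ δ - 1| + K / a * t ^ (δ / 2) := by
        rw [← add_halves δ, rpow_add ht, add_halves]
        field_simp

theorem tendsto_integral_rpow_mul_div_integral_rpow_nhds_one
    (hpos : ∀ ε, 0 < ε → ρ {x | β x < ε} ≠ 0) :
    Tendsto (fun t => (∫ x, (u * t) ^ β x ∂ρ) / (∫ x, t ^ β x ∂ρ)) (𝓝[>] 0) (𝓝 1) := by
  rw [Metric.tendsto_nhds]
  intro ε hε
  have hcont : Tendsto (fun d : ℝ => |u ^ d - 1|) (𝓝[>] 0) (𝓝 0) := by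
    have : ContinuousAt (fun d : ℝ => |u ^ d - 1|) 0 :=
      ((continuousAt_const_rpow hu.ne').sub continuousAt_const).abs
    simpa using this.tendsto.mono_left nhdsWithin_le_nhds
  obtain ⟨δ, hδ, hδε⟩ : ∃ δ : ℝ, 0 < δ ∧ |u ^ δ - 1| < ε :=
    (eventually_mem_nhdsWithin.and (hcont.eventually_lt_const hε)).exists
  set C := |u ^ M - 1| * ρ.real univ / ρ.real {x | β x < δ / 2}
  have ha : 0 < ρ.real {x | β x < δ / 2} :=
    ENNReal.toReal_pos (hpos _ (half_pos hδ)) (measure_ne_top ρ _)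
  have hbound : Tendsto (fun t : ℝ => |u ^ δ - 1| + C * t ^ (δ / 2)) (𝓝[>] 0)
      (𝓝 (|u ^ δ - 1|)) := by
    have hrpow : Tendsto (fun t : ℝ => t ^ (δ / 2)) (𝓝[>] 0) (𝓝 0) := by
      have : ContinuousAt (fun t : ℝ => t ^ (δ / 2)) 0 :=
        continuousAt_rpow_const 0 (δ / 2) (Or.inr (by positivity))
      simpa [zero_rpow (half_pos hδ).ne'] using this.tendsto.mono_left nhdsWithin_le_nhds
    simpa using (hrpow.const_mul C).const_add (|u ^ δ - 1|)
  filter_upwards [Ioo_mem_nhdsGT one_pos, hbound.eventually_lt_const hδε] with t ht hlt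
  rw [Real.dist_eq]
  exact (abs_integral_rpow_mul_div_sub_one_le hβ hM h0 hu ht.1 ht.2.le ha).trans_lt hlt

end RpowIntegral

theorem stmt_8_general {E : Type*} [MeasurableSpace E] (ρ : Measure E) [IsFiniteMeasure ρ]
    (α : E → ℝ) (hαmeas : Measurable α) (hαbdd : ∃ M : ℝ, ∀ x, |α x| ≤ M)
    (α₀ : ℝ) (hα₀ : IsLUB {r : ℝ | ρ {x | α x < r} = 0} α₀) :
    ∀ u : ℝ, 0 < u →
      Filter.Tendsto (fun t => (∫ x, (u * t) ^ α x ∂ρ) / (∫ x, t ^ α x ∂ρ))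
        (nhdsWithin 0 (Set.Ioi 0)) (nhds (u ^ α₀)) := by
  intro u hu
  obtain ⟨M, hM⟩ := hαbdd
  have hβM : ∀ x, |α x - α₀| ≤ M + |α₀| := fun x => (abs_sub _ _).trans (by linarith [hM x])
  have h0 : ∀ᵐ x ∂ρ, 0 ≤ α x - α₀ := by
    filter_upwards [ae_le_of_isLUB_measure_lt_eq_zero hα₀] with x hx using sub_nonneg.2 hx
  have hpos : ∀ ε, 0 < ε → ρ {x | α x - α₀ < ε} ≠ 0 := by
    simpa only [sub_lt_iff_lt_add'] using fun ε => measure_lt_add_ne_zero_of_isLUB hα₀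
  have key := (tendsto_integral_rpow_mul_div_integral_rpow_nhds_one (hαmeas.sub_const α₀) hβM h0 hu
    hpos).const_mul (u ^ α₀)
  rw [mul_one] at key
  refine key.congr' (eventually_nhdsWithin_of_forall fun t (ht : 0 < t) => ?_)
  dsimp only
  rw [integral_rpow_eq_rpow_mul_integral_rpow_sub (β := α) ht α₀,
    integral_rpow_eq_rpow_mul_integral_rpow_sub (β := α) (mul_pos hu ht) α₀, mul_rpow hu.le ht.le,
    mul_div_mul_comm, mul_div_cancel_right₀ _ (rpow_pos_of_pos ht α₀).ne']

/-- Lemma 2.6 (first part): for a finite nonzero measure `ρ` and a bounded measurable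
`α : E → ℝ` with essential infimum `α₀ = sup{r : ρ(α < r) = 0}`, the function
`t ↦ ∫_E t^{α(x)} ρ(dx)` is regularly varying at `0` with index `α₀`. -/
theorem stmt_8 {E : Type*} [MeasurableSpace E] (ρ : Measure E) [IsFiniteMeasure ρ]
    (hρ : ρ ≠ 0) (α : E → ℝ) (hαmeas : Measurable α) (hαbdd : ∃ M : ℝ, ∀ x, |α x| ≤ M)
    (α₀ : ℝ) (hα₀ : IsLUB {r : ℝ | ρ {x | α x < r} = 0} α₀) :
    ∀ u : ℝ, 0 < u →
      Filter.Tendsto (fun t => (∫ x, (u * t) ^ α x ∂ρ) / (∫ x, t ^ α x ∂ρ))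
        (nhdsWithin 0 (Set.Ioi 0)) (nhds (u ^ α₀)) :=
  stmt_8_general ρ α hαmeas hαbdd α₀ hα₀
end

section
/- Let (E, ℰ) be a measurable space, ρ a finite nonzero measure on (E, ℰ), and α : E → ℝ a bounded measurable function whose essential infimum α₀ := sup{ r ∈ ℝ : ρ({x : α(x) < r}) = 0 } is a real number. If ρ({x : α(x) = α₀}) > 0, then ∫_E t^{α(x)} ρ(dx) is asymptotically equivalent to ρ({x : α(x) = α₀}) · t^{α₀} as t → 0+, i.e. (∫_E t^{α(x)} ρ(dx)) / (ρ({x : α(x) = α₀}) t^{α₀}) → 1 as t → 0+. -/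
open MeasureTheory Filter Real Set Topology

/-! Since `α₀` is the essential infimum, `α - α₀ ≥ 0` almost everywhere, and
`∫ t ^ α = t ^ α₀ ∫ t ^ (α - α₀)`. As `t → 0+`, `t ^ (α x - α₀)` tends to `0 ^ (α x - α₀)`, the
indicator of `{α = α₀}`, and is bounded by `1` for `t ≤ 1`; dominated convergence gives
`∫ t ^ (α - α₀) → ρ {α = α₀}`. -/

section

variable {E : Type*} [MeasurableSpace E] {μ : Measure E}

theorem ae_le_of_isLUB_setOf_measure_lt_eq_zero {f : E → ℝ} {a : ℝ}
    (h : IsLUB {r : ℝ | μ {x | f x < r} = 0} a) : ∀ᵐ x ∂μ, a ≤ f x := by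
  have h_rat : ∀ q : ℚ, (q : ℝ) < a → ∀ᵐ x ∂μ, (q : ℝ) ≤ f x := fun q hq => by
    obtain ⟨r, hr, hqr, -⟩ := h.exists_between hq
    exact measure_mono_null (fun x (hx : ¬(q : ℝ) ≤ f x) => (not_le.1 hx).trans hqr) hr
  have h_all : ∀ᵐ x ∂μ, ∀ q : ℚ, (q : ℝ) < a → (q : ℝ) ≤ f x :=
    ae_all_iff.2 fun q => eventually_imp_distrib_left.2 (h_rat q)
  filter_upwards [h_all] with x hx
  exact le_of_forall_rat_lt_imp_le hx

theorem integral_zero_rpow_eq_measureReal {g : E → ℝ} (hg : Measurable g) :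
    ∫ x, (0 : ℝ) ^ g x ∂μ = μ.real {x | g x = 0} := by
  have : (fun x => (0 : ℝ) ^ g x) = {x | g x = 0}.indicator 1 := by
    ext x
    by_cases hx : g x = 0 <;> simp [hx, zero_rpow]
  rw [this]
  exact integral_indicator_one (hg (measurableSet_singleton 0))

theorem tendsto_integral_rpow_nhdsGT_zero [IsFiniteMeasure μ] {g : E → ℝ} (hg : Measurable g)
    (hg_nonneg : ∀ᵐ x ∂μ, 0 ≤ g x) :
    Tendsto (fun t : ℝ => ∫ x, t ^ g x ∂μ) (𝓝[>] 0) (𝓝 (μ.real {x | g x = 0})) := by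
  rw [← integral_zero_rpow_eq_measureReal hg]
  refine tendsto_integral_filter_of_dominated_convergence 1 ?_ ?_ (integrable_const 1) ?_
  · exact .of_forall fun t => (measurable_const.pow hg).aestronglyMeasurable
  · filter_upwards [Ioo_mem_nhdsGT zero_lt_one] with t ht
    filter_upwards [hg_nonneg] with x hx
    rw [norm_of_nonneg (rpow_nonneg ht.1.le _)]
    exact rpow_le_one ht.1.le ht.2.le hx
  · filter_upwards [hg_nonneg] with x hx
    exact ((continuousAt_rpow_const 0 _ (Or.inr hx)).tendsto).mono_left nhdsWithin_le_nhds

end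

theorem stmt_9_general {E : Type*} [MeasurableSpace E] (ρ : Measure E) [IsFiniteMeasure ρ]
    (α : E → ℝ) (hαmeas : Measurable α)
    (α₀ : ℝ) (hα₀ : IsLUB {r : ℝ | ρ {x | α x < r} = 0} α₀)
    (hpos : 0 < ρ {x | α x = α₀}) :
    Filter.Tendsto
      (fun t => (∫ x, t ^ α x ∂ρ) / ((ρ {x | α x = α₀}).toReal * t ^ α₀))
      (nhdsWithin 0 (Set.Ioi 0)) (nhds 1) := by
  have hα_ae : ∀ᵐ x ∂ρ, 0 ≤ α x - α₀ :=
    (ae_le_of_isLUB_setOf_measure_lt_eq_zero hα₀).mono fun x hx => sub_nonneg.2 hx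
  have hc : ρ.real {x | α x - α₀ = 0} ≠ 0 := by
    simpa only [sub_eq_zero, measureReal_def]
      using (ENNReal.toReal_pos hpos.ne' (measure_ne_top ρ _)).ne'
  have hlim := (tendsto_integral_rpow_nhdsGT_zero (hαmeas.sub_const α₀) hα_ae).div_const
    (ρ.real {x | α x - α₀ = 0})
  rw [div_self hc] at hlim
  refine hlim.congr' ?_
  filter_upwards [self_mem_nhdsWithin] with t (ht : 0 < t)
  simp only [sub_eq_zero, measureReal_def, rpow_sub ht, integral_div]
  field_simp [(rpow_pos_of_pos ht α₀).ne']

/-- Lemma 2.6 (second part): for a finite nonzero measure `ρ` and a bounded measurable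
`α : E → ℝ` with essential infimum `α₀ = sup{r : ρ(α < r) = 0}`, if `ρ(α = α₀) > 0` then
`∫_E t^{α(x)} ρ(dx) ∼ ρ(α = α₀) t^{α₀}` as `t → 0+`. -/
theorem stmt_9 {E : Type*} [MeasurableSpace E] (ρ : Measure E) [IsFiniteMeasure ρ]
    (hρ : ρ ≠ 0) (α : E → ℝ) (hαmeas : Measurable α) (hαbdd : ∃ M : ℝ, ∀ x, |α x| ≤ M)
    (α₀ : ℝ) (hα₀ : IsLUB {r : ℝ | ρ {x | α x < r} = 0} α₀)
    (hpos : 0 < ρ {x | α x = α₀}) :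
    Filter.Tendsto
      (fun t => (∫ x, t ^ α x ∂ρ) / ((ρ {x | α x = α₀}).toReal * t ^ α₀))
      (nhdsWithin 0 (Set.Ioi 0)) (nhds 1) :=
  stmt_9_general ρ α hαmeas α₀ hα₀ hpos
end

section
/- Let α ∈ (1,2) and C > 0. Let F : [0,∞) → [0,∞) be a function such that F(θ) ≤ Cθ for all θ ≥ 0 and F(θ) ≤ C ∫_0^θ ( ∫_0^1 F(r u^{1/(α−1)})^{α−1} u^{−1} du )^{1/(α−1)} dr for all θ ≥ 0. Then F(θ) = 0 for all θ ≥ 0. -/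
/-!
Feeding a bound `F s ≤ K s^m` (`m ≥ 1`) into the inner integral gives, since
`(r u^{1/β})^m ≤ r^m u^{1/β}` for `u ∈ (0,1)`, an integrand at most `(K r^m)^β`; hence the
outer integrand is at most `K r^m` and the inequality upgrades the bound to
`F θ ≤ C K θ^{m+1}/(m+1)`. Starting from `F θ ≤ Cθ` this gives `F θ ≤ (Cθ)^{n+1}/(n+1)!`
for every `n`, which tends to `0`.
-/

open MeasureTheory Filter Real Set Topology Nat

/-- After the substitution `v = r u^{1/β}` this is `(β ∫_0^r F(v)^β dv/v)^{1/β}`. -/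
noncomputable def dilationMean (β : ℝ) (F : ℝ → ℝ) (r : ℝ) : ℝ :=
  (∫ u in Ioo (0 : ℝ) 1, F (r * u ^ (1 / β)) ^ β * u⁻¹) ^ (1 / β)

lemma setIntegral_mono_on_of_nonneg {X : Type*} [MeasurableSpace X] {μ : Measure X}
    {s : Set X} {f g : X → ℝ} (hs : MeasurableSet s) (hf : ∀ x ∈ s, 0 ≤ f x)
    (hg : IntegrableOn g s μ) (h : ∀ x ∈ s, f x ≤ g x) :
    ∫ x in s, f x ∂μ ≤ ∫ x in s, g x ∂μ :=
  integral_mono_of_nonneg ((ae_restrict_iff' hs).2 (.of_forall hf)) hg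
    ((ae_restrict_iff' hs).2 (.of_forall h))

lemma setIntegral_Ioo_pow (n : ℕ) {θ : ℝ} (hθ : 0 ≤ θ) :
    ∫ r in Ioo 0 θ, r ^ n = θ ^ (n + 1) / (n + 1) := by
  rw [← integral_Ioc_eq_integral_Ioo, ← intervalIntegral.integral_of_le hθ, integral_pow]
  simp

section DilationMean

variable {β : ℝ} {F : ℝ → ℝ}

lemma dilationIntegrand_nonneg (hF : ∀ s ≥ 0, 0 ≤ F s) {r : ℝ} (hr : 0 ≤ r) :
    ∀ u ∈ Ioo (0 : ℝ) 1, 0 ≤ F (r * u ^ (1 / β)) ^ β * u⁻¹ := fun u hu =>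
  mul_nonneg (rpow_nonneg (hF _ (by have := hu.1.le; positivity)) _) (inv_nonneg.2 hu.1.le)

lemma dilationMean_nonneg (hF : ∀ s ≥ 0, 0 ≤ F s) {r : ℝ} (hr : 0 ≤ r) :
    0 ≤ dilationMean β F r :=
  rpow_nonneg (setIntegral_nonneg measurableSet_Ioo (dilationIntegrand_nonneg hF hr)) _

lemma dilationMean_le_of_le_pow (hβ : 0 < β) (hF : ∀ s ≥ 0, 0 ≤ F s) {K : ℝ} {m : ℕ}
    (hK : 0 ≤ K) (hm : m ≠ 0) (hFK : ∀ s ≥ 0, F s ≤ K * s ^ m) {r : ℝ} (hr : 0 ≤ r) :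
    dilationMean β F r ≤ K * r ^ m := by
  have hKr : 0 ≤ K * r ^ m := by positivity
  have integrand_le : ∀ u ∈ Ioo (0 : ℝ) 1,
      F (r * u ^ (1 / β)) ^ β * u⁻¹ ≤ (K * r ^ m) ^ β := by
    intro u ⟨hu0, hu1⟩
    have hv0 : 0 ≤ u ^ (1 / β) := rpow_nonneg hu0.le _
    have hv1 : u ^ (1 / β) ≤ 1 := rpow_le_one hu0.le hu1.le (by positivity)
    have hFu : F (r * u ^ (1 / β)) ≤ K * r ^ m * u ^ (1 / β) :=
      calc F (r * u ^ (1 / β)) ≤ K * (r * u ^ (1 / β)) ^ m := hFK _ (by positivity)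
        _ = K * r ^ m * (u ^ (1 / β)) ^ m := by ring
        _ ≤ K * r ^ m * u ^ (1 / β) := by gcongr; exact pow_le_of_le_one hv0 hv1 hm
    calc F (r * u ^ (1 / β)) ^ β * u⁻¹ ≤ (K * r ^ m * u ^ (1 / β)) ^ β * u⁻¹ := by
          gcongr
          exact hF _ (by positivity)
      _ = (K * r ^ m) ^ β * u * u⁻¹ := by
          rw [mul_rpow hKr hv0, one_div, rpow_inv_rpow hu0.le hβ.ne']
      _ = (K * r ^ m) ^ β := by rw [mul_assoc, mul_inv_cancel₀ hu0.ne', mul_one]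
  have inner_le : ∫ u in Ioo (0 : ℝ) 1, F (r * u ^ (1 / β)) ^ β * u⁻¹ ≤ (K * r ^ m) ^ β :=
    calc ∫ u in Ioo (0 : ℝ) 1, F (r * u ^ (1 / β)) ^ β * u⁻¹
        ≤ ∫ _ in Ioo (0 : ℝ) 1, (K * r ^ m) ^ β :=
          setIntegral_mono_on_of_nonneg measurableSet_Ioo (dilationIntegrand_nonneg hF hr)
            (integrableOn_const measure_Ioo_lt_top.ne) integrand_le
      _ = (K * r ^ m) ^ β := by simp
  calc dilationMean β F r ≤ ((K * r ^ m) ^ β) ^ (1 / β) :=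
        rpow_le_rpow (setIntegral_nonneg measurableSet_Ioo (dilationIntegrand_nonneg hF hr))
          inner_le (by positivity)
    _ = K * r ^ m := by rw [one_div, rpow_rpow_inv hKr hβ.ne']

lemma setIntegral_dilationMean_le_of_le_pow (hβ : 0 < β) (hF : ∀ s ≥ 0, 0 ≤ F s) {K : ℝ}
    {m : ℕ} (hK : 0 ≤ K) (hm : m ≠ 0) (hFK : ∀ s ≥ 0, F s ≤ K * s ^ m) {θ : ℝ} (hθ : 0 ≤ θ) :
    ∫ r in Ioo 0 θ, dilationMean β F r ≤ K * (θ ^ (m + 1) / (m + 1)) := by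
  calc ∫ r in Ioo 0 θ, dilationMean β F r ≤ ∫ r in Ioo 0 θ, K * r ^ m :=
        setIntegral_mono_on_of_nonneg measurableSet_Ioo
          (fun r hr => dilationMean_nonneg hF hr.1.le)
          ((continuous_const.mul (continuous_pow m)).integrableOn_Icc.mono_set Ioo_subset_Icc_self)
          (fun r hr => dilationMean_le_of_le_pow hβ hF hK hm hFK hr.1.le)
    _ = K * (θ ^ (m + 1) / (m + 1)) := by
        rw [integral_const_mul, setIntegral_Ioo_pow m hθ]

lemma le_pow_div_factorial_of_le_integral_dilationMean (hβ : 0 < β) {C : ℝ} (hC : 0 ≤ C)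
    (hF : ∀ s ≥ 0, 0 ≤ F s) (hFlin : ∀ θ ≥ 0, F θ ≤ C * θ)
    (hFineq : ∀ θ ≥ 0, F θ ≤ C * ∫ r in Ioo 0 θ, dilationMean β F r) (n : ℕ) :
    ∀ θ ≥ 0, F θ ≤ (C * θ) ^ (n + 1) / (n + 1)! := by
  induction n with
  | zero => simpa using hFlin
  | succ n ih =>
    intro θ hθ
    set K := C ^ (n + 1) / (n + 1)!
    have hFK : ∀ s ≥ 0, F s ≤ K * s ^ (n + 1) := fun s hs =>
      (ih s hs).trans_eq (by rw [mul_pow]; ring)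
    calc F θ ≤ C * ∫ r in Ioo 0 θ, dilationMean β F r := hFineq θ hθ
      _ ≤ C * (K * (θ ^ (n + 1 + 1) / (↑(n + 1) + 1))) := by
          gcongr
          exact setIntegral_dilationMean_le_of_le_pow hβ hF (by positivity) n.succ_ne_zero hFK hθ
      _ = (C * θ) ^ (n + 1 + 1) / (n + 1 + 1)! := by
          rw [Nat.factorial_succ (n + 1)]
          push_cast [K]
          field_simp
          ring

end DilationMean

theorem stmt_10_general (α C : ℝ) (hα1 : 1 < α) (hC : 0 < C)
    (F : ℝ → ℝ) (hFnonneg : ∀ θ ≥ (0 : ℝ), 0 ≤ F θ)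
    (hFlin : ∀ θ ≥ (0 : ℝ), F θ ≤ C * θ)
    (hFineq : ∀ θ ≥ (0 : ℝ), F θ ≤ C * ∫ r in Set.Ioo 0 θ,
      (∫ u in Set.Ioo (0:ℝ) 1, F (r * u ^ (1 / (α - 1))) ^ (α - 1) * u⁻¹) ^ (1 / (α - 1))) :
    ∀ θ ≥ (0 : ℝ), F θ = 0 := by
  intro θ hθ
  have hbound := le_pow_div_factorial_of_le_integral_dilationMean (sub_pos.2 hα1) hC.le
    hFnonneg hFlin hFineq
  have hlim : Tendsto (fun n : ℕ => (C * θ) ^ (n + 1) / (n + 1)!) atTop (𝓝 0) :=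
    (FloorSemiring.tendsto_pow_div_factorial_atTop (C * θ)).comp (tendsto_add_atTop_nat 1)
  exact le_antisymm (ge_of_tendsto' hlim fun n => hbound n θ hθ) (hFnonneg θ hθ)

/-- Lemma A.1: a Gronwall-type result. If `α ∈ (1,2)`, `C > 0` and `F : [0,∞) → [0,∞)`
satisfies `F(θ) ≤ Cθ` and
`F(θ) ≤ C ∫_0^θ (∫_0^1 F(r u^{1/(α-1)})^{α-1} u⁻¹ du)^{1/(α-1)} dr` for all `θ ≥ 0`,
then `F ≡ 0` on `[0,∞)`. -/
theorem stmt_10 (α C : ℝ) (hα1 : 1 < α) (hα2 : α < 2) (hC : 0 < C)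
    (F : ℝ → ℝ) (hFnonneg : ∀ θ ≥ (0 : ℝ), 0 ≤ F θ)
    (hFlin : ∀ θ ≥ (0 : ℝ), F θ ≤ C * θ)
    (hFineq : ∀ θ ≥ (0 : ℝ), F θ ≤ C * ∫ r in Set.Ioo 0 θ,
      (∫ u in Set.Ioo (0:ℝ) 1, F (r * u ^ (1 / (α - 1))) ^ (α - 1) * u⁻¹) ^ (1 / (α - 1))) :
    ∀ θ ≥ (0 : ℝ), F θ = 0 :=
  stmt_10_general α C hα1 hC F hFnonneg hFlin hFineq
end

section
/- Let α ∈ (1,2) and C > 0. Let F : [0,∞) → [0,∞) be a function such that F(θ) ≤ Cθ for all θ ≥ 0 and F(θ) ≤ C ∫_0^θ ( ∫_0^1 F(r u^{1/(α−1)})^{α−1} u^{−1} du )^{1/(α−1)} dr for all θ ≥ 0. Then for every natural number k ≥ 1 and every θ ≥ 0, F(θ) ≤ C^k θ^k / k!. -/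
open MeasureTheory Real Set

/-! Induction on `k`. Writing `β = α - 1`, a bound `F x ≤ D xᵏ` gives
`F (r u^{1/β})^β u⁻¹ ≤ (D rᵏ)^β u^{k-1}`, since `(u^{1/β})^{kβ} = uᵏ`;
so the inner integral is at most `(D rᵏ)^β / k`, its `1/β`-th power at most `D rᵏ / k^{1/β} ≤ D rᵏ`,
and integrating over `r ∈ (0, θ)` produces the factor `θ^{k+1} / (k+1)`. -/

noncomputable def innerPowerMean (β : ℝ) (F : ℝ → ℝ) (r : ℝ) : ℝ :=
  (∫ u in Ioo (0:ℝ) 1, F (r * u ^ (1 / β)) ^ β * u⁻¹) ^ (1 / β)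

theorem integral_Ioo_zero_const_mul_pow (A : ℝ) (n : ℕ) {θ : ℝ} (hθ : 0 ≤ θ) :
    ∫ x in Ioo 0 θ, A * x ^ n = A * θ ^ (n + 1) / (n + 1) := by
  rw [← integral_Ioc_eq_integral_Ioo, ← intervalIntegral.integral_of_le hθ,
    intervalIntegral.integral_const_mul, integral_pow, zero_pow n.succ_ne_zero]
  ring

theorem rpow_mul_pow_rpow_inv_mul_inv {β D r u : ℝ} (m : ℕ) (hβ : 0 < β) (hD : 0 ≤ D)
    (hr : 0 ≤ r) (hu : 0 < u) :
    (D * (r * u ^ (1 / β)) ^ (m + 1)) ^ β * u⁻¹ = (D * r ^ (m + 1)) ^ β * u ^ m := by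
  have hu_pow : (u ^ (1 / β)) ^ (m + 1) = u ^ ((m + 1 : ℕ) / β) := by
    rw [← rpow_natCast, ← rpow_mul hu.le]
    ring_nf
  rw [mul_pow, hu_pow, ← mul_assoc, mul_rpow (by positivity) (by positivity),
    ← rpow_mul hu.le, div_mul_cancel₀ _ hβ.ne', rpow_natCast, pow_succ u m, mul_assoc,
    mul_inv_cancel_right₀ hu.ne']

theorem innerPowerMean_integrand_nonneg {β : ℝ} {F : ℝ → ℝ} (hF : ∀ x ≥ (0 : ℝ), 0 ≤ F x)
    {r : ℝ} (hr : 0 ≤ r) {u : ℝ} (hu : u ∈ Ioo (0 : ℝ) 1) :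
    0 ≤ F (r * u ^ (1 / β)) ^ β * u⁻¹ :=
  mul_nonneg (rpow_nonneg (hF _ (mul_nonneg hr (rpow_nonneg hu.1.le _))) _)
    (inv_nonneg.2 hu.1.le)

theorem innerPowerMean_nonneg {β : ℝ} {F : ℝ → ℝ} (hF : ∀ x ≥ (0 : ℝ), 0 ≤ F x) {r : ℝ}
    (hr : 0 ≤ r) : 0 ≤ innerPowerMean β F r :=
  rpow_nonneg (setIntegral_nonneg measurableSet_Ioo fun _ hu ↦
    innerPowerMean_integrand_nonneg hF hr hu) _

theorem innerPowerMean_le_of_le_mul_pow {β D : ℝ} {F : ℝ → ℝ} (m : ℕ) (hβ : 0 < β)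
    (hD : 0 ≤ D) (hF0 : ∀ x ≥ (0 : ℝ), 0 ≤ F x) (hF : ∀ x ≥ (0 : ℝ), F x ≤ D * x ^ (m + 1))
    {r : ℝ} (hr : 0 ≤ r) : innerPowerMean β F r ≤ D * r ^ (m + 1) := by
  set A := (D * r ^ (m + 1)) ^ β
  have hinner : ∫ u in Ioo (0:ℝ) 1, F (r * u ^ (1 / β)) ^ β * u⁻¹ ≤ A / (m + 1) := by
    calc ∫ u in Ioo (0:ℝ) 1, F (r * u ^ (1 / β)) ^ β * u⁻¹
        ≤ ∫ u in Ioo (0:ℝ) 1, A * u ^ m := by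
          refine setIntegral_mono_of_nonneg
            (fun u hu ↦ innerPowerMean_integrand_nonneg hF0 hr hu) (fun u hu ↦ ?_)
            ((by fun_prop : Continuous fun u : ℝ ↦ A * u ^ m).integrableOn_Icc.mono_set
              Ioo_subset_Icc_self)
          rw [← rpow_mul_pow_rpow_inv_mul_inv m hβ hD hr hu.1]
          have hx : 0 ≤ r * u ^ (1 / β) := mul_nonneg hr (rpow_nonneg hu.1.le _)
          exact mul_le_mul_of_nonneg_right (rpow_le_rpow (hF0 _ hx) (hF _ hx) hβ.le)
            (inv_nonneg.2 hu.1.le)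
      _ = A / (m + 1) := by
          rw [integral_Ioo_zero_const_mul_pow A m zero_le_one, one_pow, mul_one]
  have hm : (1 : ℝ) ≤ (m + 1) ^ (1 / β) :=
    one_le_rpow (by linarith [m.cast_nonneg (α := ℝ)]) (by positivity)
  calc innerPowerMean β F r ≤ (A / (m + 1)) ^ (1 / β) :=
        rpow_le_rpow (setIntegral_nonneg measurableSet_Ioo fun u hu ↦
          innerPowerMean_integrand_nonneg hF0 hr hu) hinner (by positivity)
    _ = D * r ^ (m + 1) / (m + 1) ^ (1 / β) := by
        rw [div_rpow (by positivity) (by positivity), ← rpow_mul (by positivity),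
          mul_one_div_cancel hβ.ne', rpow_one]
    _ ≤ D * r ^ (m + 1) := div_le_self (by positivity) hm

theorem integral_innerPowerMean_le {β D : ℝ} {F : ℝ → ℝ} (m : ℕ) (hβ : 0 < β)
    (hD : 0 ≤ D) (hF0 : ∀ x ≥ (0 : ℝ), 0 ≤ F x) (hF : ∀ x ≥ (0 : ℝ), F x ≤ D * x ^ (m + 1))
    {θ : ℝ} (hθ : 0 ≤ θ) :
    ∫ r in Ioo 0 θ, innerPowerMean β F r ≤ D * θ ^ (m + 2) / (m + 2) := by
  calc ∫ r in Ioo 0 θ, innerPowerMean β F r ≤ ∫ r in Ioo 0 θ, D * r ^ (m + 1) :=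
        setIntegral_mono_of_nonneg (fun r hr ↦ innerPowerMean_nonneg hF0 hr.1.le)
          (fun r hr ↦ innerPowerMean_le_of_le_mul_pow m hβ hD hF0 hF hr.1.le)
          ((by fun_prop : Continuous fun r : ℝ ↦ D * r ^ (m + 1)).integrableOn_Icc.mono_set
            Ioo_subset_Icc_self)
    _ = D * θ ^ (m + 2) / (m + 2) := by
        rw [integral_Ioo_zero_const_mul_pow D (m + 1) hθ]
        push_cast
        ring

theorem le_pow_div_factorial_succ {β C : ℝ} {F : ℝ → ℝ} (m : ℕ) (hβ : 0 < β) (hC : 0 ≤ C)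
    (hF0 : ∀ x ≥ (0 : ℝ), 0 ≤ F x)
    (hFineq : ∀ θ ≥ (0 : ℝ), F θ ≤ C * ∫ r in Ioo 0 θ, innerPowerMean β F r)
    (hF : ∀ x ≥ (0 : ℝ), F x ≤ C ^ (m + 1) * x ^ (m + 1) / (m + 1).factorial)
    {θ : ℝ} (hθ : 0 ≤ θ) : F θ ≤ C ^ (m + 2) * θ ^ (m + 2) / (m + 2).factorial := by
  have hF' : ∀ x ≥ (0 : ℝ), F x ≤ C ^ (m + 1) / (m + 1).factorial * x ^ (m + 1) := fun x hx ↦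
    (hF x hx).trans_eq (mul_div_right_comm _ _ _)
  calc F θ ≤ C * (C ^ (m + 1) / (m + 1).factorial * θ ^ (m + 2) / (m + 2)) :=
        (hFineq θ hθ).trans (mul_le_mul_of_nonneg_left
          (integral_innerPowerMean_le m hβ (by positivity) hF0 hF' hθ) hC)
    _ = C ^ (m + 2) * θ ^ (m + 2) / (m + 2).factorial := by
        rw [Nat.factorial_succ (m + 1)]
        push_cast
        field_simp
        ring

theorem stmt_11_general (α C : ℝ) (hα1 : 1 < α) (hC : 0 < C)
    (F : ℝ → ℝ) (hFnonneg : ∀ θ ≥ (0 : ℝ), 0 ≤ F θ)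
    (hFlin : ∀ θ ≥ (0 : ℝ), F θ ≤ C * θ)
    (hFineq : ∀ θ ≥ (0 : ℝ), F θ ≤ C * ∫ r in Set.Ioo 0 θ,
      (∫ u in Set.Ioo (0:ℝ) 1, F (r * u ^ (1 / (α - 1))) ^ (α - 1) * u⁻¹) ^ (1 / (α - 1))) :
    ∀ k : ℕ, 1 ≤ k → ∀ θ ≥ (0 : ℝ), F θ ≤ C ^ k * θ ^ k / (Nat.factorial k : ℝ) := by
  intro k hk
  obtain ⟨m, rfl⟩ := Nat.exists_eq_add_of_le' hk
  induction m with
  | zero => simpa using hFlin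
  | succ m ih =>
    exact fun θ hθ ↦ le_pow_div_factorial_succ m (sub_pos.2 hα1) hC.le hFnonneg hFineq
      (ih (by omega)) hθ

/-- The inductive bound in the proof of Lemma A.1: under the Gronwall-type hypotheses,
`F(θ) ≤ C^k θ^k / k!` for every `k ≥ 1` and `θ ≥ 0`. -/
theorem stmt_11 (α C : ℝ) (hα1 : 1 < α) (hα2 : α < 2) (hC : 0 < C)
    (F : ℝ → ℝ) (hFnonneg : ∀ θ ≥ (0 : ℝ), 0 ≤ F θ)
    (hFlin : ∀ θ ≥ (0 : ℝ), F θ ≤ C * θ)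
    (hFineq : ∀ θ ≥ (0 : ℝ), F θ ≤ C * ∫ r in Set.Ioo 0 θ,
      (∫ u in Set.Ioo (0:ℝ) 1, F (r * u ^ (1 / (α - 1))) ^ (α - 1) * u⁻¹) ^ (1 / (α - 1))) :
    ∀ k : ℕ, 1 ≤ k → ∀ θ ≥ (0 : ℝ), F θ ≤ C ^ k * θ ^ k / (Nat.factorial k : ℝ) :=
  stmt_11_general α C hα1 hC F hFnonneg hFlin hFineq
end

section
/- Let α ∈ (1,2). Define G : [0,∞) → [0,∞) by G(0) = 0 and G(θ) = (1 + θ^{−(α−1)})^{−1/(α−1)} for θ > 0. Then G satisfies the nonlinear delay equation G(θ) = ∫_0^θ exp{ − (α/(α−1)) ∫_0^1 G(r u^{1/(α−1)})^{α−1} u^{−1} du } dr for all θ ≥ 0. -/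
/-!
With `b = α - 1`, the function is `G θ = θ (1 + θ^b)^(-1/b)`. Substituting it, the inner integrand
collapses to `(u + r^(-b))⁻¹`, so the inner integral is `log (1 + r^b)` and the exponential equals
`(1 + r^b)^(-(b+1)/b)`, which is exactly the derivative of `θ ↦ θ (1 + θ^b)^(-1/b)`.
-/

open MeasureTheory Filter Real Set

lemma one_add_rpow_neg_rpow_eq_mul {b θ : ℝ} (hb : b ≠ 0) (hθ : 0 < θ) :
    (1 + θ ^ (-b)) ^ (-(1 / b)) = θ * (1 + θ ^ b) ^ (-(1 / b)) := by
  have hsplit : 1 + θ ^ (-b) = θ ^ (-b) * (1 + θ ^ b) := by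
    rw [mul_add, mul_one, ← rpow_add hθ, neg_add_cancel, rpow_zero, add_comm]
  rw [hsplit, mul_rpow (by positivity) (by positivity), ← rpow_mul hθ.le,
    show -b * -(1 / b) = 1 by field_simp, rpow_one]

lemma integral_Ioo_zero_one_inv_add {c : ℝ} (hc : 0 < c) :
    ∫ u in Ioo (0 : ℝ) 1, (u + c)⁻¹ = log ((1 + c) / c) := by
  rw [← integral_Ioc_eq_integral_Ioo, ← intervalIntegral.integral_of_le zero_le_one,
    intervalIntegral.integral_comp_add_right (fun x => x⁻¹), zero_add, add_comm,
    integral_inv (by rw [uIcc_of_le (by linarith)]; exact fun h => hc.not_ge h.1)]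

lemma inner_integrand_eq_inv_add {b r u : ℝ} (hb : b ≠ 0) (hr : 0 < r) (hu : 0 < u) :
    ((1 + (r * u ^ (1 / b)) ^ (-b)) ^ (-(1 / b))) ^ b * u⁻¹ = (u + r ^ (-b))⁻¹ := by
  have hscale : (r * u ^ (1 / b)) ^ (-b) = r ^ (-b) * u⁻¹ := by
    rw [mul_rpow hr.le (by positivity), ← rpow_mul hu.le,
      show 1 / b * -b = -1 by field_simp, rpow_neg_one]
  have hpos : 0 < 1 + r ^ (-b) * u⁻¹ := by positivity
  rw [hscale, ← rpow_mul hpos.le, show -(1 / b) * b = -1 by field_simp, rpow_neg_one, ← mul_inv]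
  congr 1
  field_simp

lemma inner_integral_eq_log_one_add_rpow {b r : ℝ} (hb : b ≠ 0) (hr : 0 < r) :
    ∫ u in Ioo (0 : ℝ) 1, ((1 + (r * u ^ (1 / b)) ^ (-b)) ^ (-(1 / b))) ^ b * u⁻¹
      = log (1 + r ^ b) := by
  rw [setIntegral_congr_fun measurableSet_Ioo fun u hu => inner_integrand_eq_inv_add hb hr hu.1,
    integral_Ioo_zero_one_inv_add (by positivity), rpow_neg hr.le]
  congr 1
  field_simp
  ring

lemma hasDerivAt_mul_one_add_rpow {b r : ℝ} (hb : b ≠ 0) (hr : 0 < r) :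
    HasDerivAt (fun x : ℝ => x * (1 + x ^ b) ^ (-(1 / b))) ((1 + r ^ b) ^ (-((b + 1) / b))) r := by
  have hpos : 0 < 1 + r ^ b := by positivity
  have hinner : HasDerivAt (fun x : ℝ => (1 + x ^ b) ^ (-(1 / b)))
      (b * r ^ (b - 1) * (-(1 / b)) * (1 + r ^ b) ^ (-(1 / b) - 1)) r :=
    ((hasDerivAt_rpow_const (Or.inl hr.ne')).const_add 1).rpow_const (Or.inl hpos.ne')
  refine ((hasDerivAt_id r).mul hinner).congr_deriv ?_
  have hpow : r * r ^ (b - 1) = r ^ b := by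
    rw [← rpow_one_add' hr.le (by simpa using hb), add_sub_cancel]
  have hsplit : (1 + r ^ b) ^ (-(1 / b)) = (1 + r ^ b) ^ (-(1 / b) - 1) * (1 + r ^ b) := by
    rw [← rpow_add_one hpos.ne', sub_add_cancel]
  rw [show -((b + 1) / b) = -(1 / b) - 1 by field_simp; ring, id_eq, one_mul, hsplit,
    show r * (b * r ^ (b - 1) * (-(1 / b)) * (1 + r ^ b) ^ (-(1 / b) - 1))
      = -(b / b) * (r * r ^ (b - 1)) * (1 + r ^ b) ^ (-(1 / b) - 1) by ring,
    hpow, div_self hb]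
  ring

lemma continuousOn_one_add_rpow {b : ℝ} (hb : 0 < b) (p θ : ℝ) :
    ContinuousOn (fun x : ℝ => (1 + x ^ b) ^ p) (Icc 0 θ) := fun x hx =>
  ((continuousAt_const.add (continuousAt_rpow_const x b (Or.inr hb.le))).rpow_const
    (Or.inl (add_pos_of_pos_of_nonneg one_pos (rpow_nonneg hx.1 b)).ne')).continuousWithinAt

lemma integral_Ioo_one_add_rpow {b θ : ℝ} (hb : 0 < b) (hθ : 0 ≤ θ) :
    ∫ r in Ioo (0 : ℝ) θ, (1 + r ^ b) ^ (-((b + 1) / b)) = θ * (1 + θ ^ b) ^ (-(1 / b)) := by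
  rw [← integral_Ioc_eq_integral_Ioo, ← intervalIntegral.integral_of_le hθ,
    intervalIntegral.integral_eq_sub_of_hasDerivAt_of_le hθ
      (continuousOn_id.mul (continuousOn_one_add_rpow hb _ θ))
      (fun x hx => hasDerivAt_mul_one_add_rpow hb.ne' hx.1)
      ((continuousOn_one_add_rpow hb _ θ).intervalIntegrable_of_Icc hθ)]
  simp

theorem stmt_12_general (α : ℝ) (hα1 : 1 < α)
    (G : ℝ → ℝ) (hG0 : G 0 = 0)
    (hGpos : ∀ θ > (0 : ℝ), G θ = (1 + θ ^ (-(α - 1))) ^ (-(1 / (α - 1)))) :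
    ∀ θ ≥ (0 : ℝ), G θ = ∫ r in Set.Ioo 0 θ,
      Real.exp (-(α / (α - 1)) *
        ∫ u in Set.Ioo (0:ℝ) 1, G (r * u ^ (1 / (α - 1))) ^ (α - 1) * u⁻¹) := by
  obtain ⟨b, hb, rfl⟩ : ∃ b, 0 < b ∧ α = b + 1 := ⟨α - 1, by linarith, by ring⟩
  simp only [add_sub_cancel_right] at hGpos ⊢
  intro θ hθ
  have hexp : ∀ r ∈ Ioo (0 : ℝ) θ,
      exp (-((b + 1) / b) * ∫ u in Ioo (0 : ℝ) 1, G (r * u ^ (1 / b)) ^ b * u⁻¹)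
        = (1 + r ^ b) ^ (-((b + 1) / b)) := by
    intro r hr
    have hG : ∀ u ∈ Ioo (0 : ℝ) 1, G (r * u ^ (1 / b)) ^ b * u⁻¹
        = ((1 + (r * u ^ (1 / b)) ^ (-b)) ^ (-(1 / b))) ^ b * u⁻¹ := fun u hu => by
      rw [hGpos _ (mul_pos hr.1 (rpow_pos_of_pos hu.1 _))]
    rw [setIntegral_congr_fun measurableSet_Ioo hG, inner_integral_eq_log_one_add_rpow hb.ne' hr.1,
      rpow_def_of_pos (by have := hr.1; positivity : 0 < 1 + r ^ b), mul_comm]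
  rw [setIntegral_congr_fun measurableSet_Ioo hexp, integral_Ioo_one_add_rpow hb hθ]
  rcases hθ.eq_or_lt with rfl | hθ
  · simp [hG0]
  · rw [hGpos θ hθ, one_add_rpow_neg_rpow_eq_mul hb.ne' hθ]

/-- Lemma A.2 (verification part): for `α ∈ (1,2)`, the function `G` with `G(0) = 0` and
`G(θ) = (1 + θ^{-(α-1)})^{-1/(α-1)}` for `θ > 0` satisfies the nonlinear delay equation
`G(θ) = ∫_0^θ exp{-(α/(α-1)) ∫_0^1 G(r u^{1/(α-1)})^{α-1} u⁻¹ du} dr` for all `θ ≥ 0`. -/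
theorem stmt_12 (α : ℝ) (hα1 : 1 < α) (hα2 : α < 2)
    (G : ℝ → ℝ) (hG0 : G 0 = 0)
    (hGpos : ∀ θ > (0 : ℝ), G θ = (1 + θ ^ (-(α - 1))) ^ (-(1 / (α - 1)))) :
    ∀ θ ≥ (0 : ℝ), G θ = ∫ r in Set.Ioo 0 θ,
      Real.exp (-(α / (α - 1)) *
        ∫ u in Set.Ioo (0:ℝ) 1, G (r * u ^ (1 / (α - 1))) ^ (α - 1) * u⁻¹) :=
  stmt_12_general α hα1 G hG0 hGpos
end

section
/- Let α ∈ (1,2). If G : [0,∞) → [0,∞) is a measurable function satisfying G(θ) = ∫_0^θ exp{ − (α/(α−1)) ∫_0^1 G(r u^{1/(α−1)})^{α−1} u^{−1} du } dr for all θ ≥ 0, then G(0) = 0 and G(θ) = (1 + θ^{−(α−1)})^{−1/(α−1)} for all θ > 0. In particular, the nonlinear delay equation has a unique solution. -/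
/-!
Write `β = α - 1` and `κ = α / β`. The function `θ (1 + θ^β)^{-1/β}` is a solution: its memory
integral is `log (1 + r^β)`, so the outer integrand is `(1 + r^β)^{-1/β - 1}`, which is its
derivative. Any solution satisfies `e^{-κ θ^β} x ≤ G x ≤ x` on `(0, θ]`; there `t ↦ t^β` is
Lipschitz with constant `O(x^{β-1})` on the values of two solutions, and `t ↦ e^{-t}` is
`1`-Lipschitz on `[0, ∞)`. Hence a bound `|G - H| ≤ B x^{1 + nβ}` on `(0, θ]` passes through the
equation as `A B / (n + 1) · x^{1 + (n+1)β}` for a constant `A`, and iterating gives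
`|G - H| ≤ A^n / n! · x^{1 + nβ} → 0`.
-/

open MeasureTheory Filter Real Set

noncomputable def memoryIntegrand (β : ℝ) (F : ℝ → ℝ) (r u : ℝ) : ℝ :=
  F (r * u ^ (1 / β)) ^ β * u⁻¹

noncomputable def memoryIntegral (β : ℝ) (F : ℝ → ℝ) (r : ℝ) : ℝ :=
  ∫ u in Ioo (0 : ℝ) 1, memoryIntegrand β F r u

noncomputable def delayMap (κ β : ℝ) (F : ℝ → ℝ) (θ : ℝ) : ℝ :=
  ∫ r in Ioo 0 θ, exp (-κ * memoryIntegral β F r)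

def SolvesDelayEq (κ β : ℝ) (F : ℝ → ℝ) : Prop :=
  ∀ θ ≥ 0, F θ = delayMap κ β F θ

noncomputable def delaySolution (β θ : ℝ) : ℝ :=
  θ * (1 + θ ^ β) ^ (-(1 / β))

lemma abs_exp_neg_sub_exp_neg_le {x y : ℝ} (hx : 0 ≤ x) (hy : 0 ≤ y) :
    |exp (-x) - exp (-y)| ≤ |x - y| := by
  have := (convex_Ici (0 : ℝ)).norm_image_sub_le_of_norm_deriv_le (f := fun t => exp (-t))
    (C := 1) (fun t _ => by fun_prop) (fun t ht => ?_) hy hx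
  · simpa using this
  · rw [((hasDerivAt_neg t).exp).deriv]
    simpa using ht

lemma abs_rpow_sub_rpow_le {p m M a b : ℝ} (hm : 0 < m) (ha : a ∈ Icc m M) (hb : b ∈ Icc m M) :
    |a ^ p - b ^ p| ≤ |p| * max (m ^ (p - 1)) (M ^ (p - 1)) * |a - b| := by
  have := (convex_Icc m M).norm_image_sub_le_of_norm_deriv_le (f := fun t => t ^ p)
    (C := |p| * max (m ^ (p - 1)) (M ^ (p - 1))) (fun t ht => ?_) (fun t ht => ?_) hb ha
  · simpa using this
  · exact (hasDerivAt_rpow_const (Or.inl (hm.trans_le ht.1).ne')).differentiableAt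
  · have ht0 : 0 < t := hm.trans_le ht.1
    rw [(hasDerivAt_rpow_const (p := p) (Or.inl ht0.ne')).deriv, norm_mul, Real.norm_eq_abs,
      Real.norm_of_nonneg (rpow_nonneg ht0.le _)]
    gcongr
    rcases le_total 0 (p - 1) with h | h
    · exact le_max_of_le_right (rpow_le_rpow ht0.le ht.2 h)
    · exact le_max_of_le_left (rpow_le_rpow_of_nonpos hm ht.1 h)

lemma abs_rpow_sub_rpow_le_of_mem_Icc {β c y a b : ℝ} (hβ : 0 < β) (hc : 0 < c) (hy : 0 < y)
    (ha : a ∈ Icc (c * y) y) (hb : b ∈ Icc (c * y) y) :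
    |a ^ β - b ^ β| ≤ β * max (c ^ (β - 1)) 1 * y ^ (β - 1) * |a - b| := by
  have hmax : max ((c * y) ^ (β - 1)) (y ^ (β - 1)) = max (c ^ (β - 1)) 1 * y ^ (β - 1) := by
    rw [mul_rpow hc.le hy.le, max_mul_of_nonneg _ _ (rpow_nonneg hy.le _), one_mul]
  simpa only [abs_of_pos hβ, hmax, mul_assoc] using
    abs_rpow_sub_rpow_le (p := β) (mul_pos hc hy) ha hb

lemma mul_rpow_one_div_rpow {β r u : ℝ} (hβ : β ≠ 0) (hr : 0 ≤ r) (hu : 0 ≤ u) :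
    (r * u ^ (1 / β)) ^ β = r ^ β * u := by
  rw [mul_rpow hr (rpow_nonneg hu _), ← rpow_mul hu, one_div_mul_cancel hβ, rpow_one]

lemma integrableOn_Ioo_rpow {s x : ℝ} (hs : -1 < s) (hx : 0 ≤ x) :
    IntegrableOn (fun r => r ^ s) (Ioo 0 x) := by
  have h := intervalIntegral.intervalIntegrable_rpow' (a := 0) (b := x) hs
  rw [intervalIntegrable_iff, uIoc_of_le hx] at h
  exact h.mono_set Ioo_subset_Ioc_self

lemma integral_Ioo_rpow {s x : ℝ} (hs : -1 < s) (hx : 0 ≤ x) :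
    ∫ r in Ioo 0 x, r ^ s = x ^ (s + 1) / (s + 1) := by
  rw [← integral_Ioc_eq_integral_Ioo, ← intervalIntegral.integral_of_le hx,
    integral_rpow (Or.inl hs), zero_rpow (by linarith), sub_zero]

section Memory

variable {β : ℝ} {F H : ℝ → ℝ}

lemma memoryIntegrand_nonneg (hF : ∀ y ≥ 0, 0 ≤ F y) {r u : ℝ} (hr : 0 ≤ r) (hu : 0 ≤ u) :
    0 ≤ memoryIntegrand β F r u :=
  mul_nonneg (rpow_nonneg (hF _ (by positivity)) _) (inv_nonneg.2 hu)

lemma memoryIntegrand_le (hβ : 0 < β) (hF : ∀ y ≥ 0, F y ∈ Icc 0 y) {r u : ℝ} (hr : 0 ≤ r)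
    (hu : 0 < u) : memoryIntegrand β F r u ≤ r ^ β := by
  have hy : 0 ≤ r * u ^ (1 / β) := by positivity
  calc memoryIntegrand β F r u ≤ (r * u ^ (1 / β)) ^ β * u⁻¹ := by
        unfold memoryIntegrand
        gcongr
        exacts [(hF _ hy).1, (hF _ hy).2]
    _ = r ^ β := by
        rw [mul_rpow_one_div_rpow hβ.ne' hr hu.le]
        field_simp

lemma memoryIntegral_nonneg (hF : ∀ y ≥ 0, 0 ≤ F y) {r : ℝ} (hr : 0 ≤ r) :
    0 ≤ memoryIntegral β F r :=
  setIntegral_nonneg measurableSet_Ioo fun _ hu => memoryIntegrand_nonneg hF hr hu.1.le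

lemma integrableOn_memoryIntegrand (hβ : 0 < β) (hFm : Measurable F)
    (hF : ∀ y ≥ 0, F y ∈ Icc 0 y) {r : ℝ} (hr : 0 ≤ r) :
    IntegrableOn (memoryIntegrand β F r) (Ioo 0 1) := by
  refine Measure.integrableOn_of_bounded (M := r ^ β) measure_Ioo_lt_top.ne
    (by unfold memoryIntegrand; fun_prop) ?_
  filter_upwards [ae_restrict_mem measurableSet_Ioo] with u hu
  rw [Real.norm_of_nonneg (memoryIntegrand_nonneg (fun y hy => (hF y hy).1) hr hu.1.le)]
  exact memoryIntegrand_le hβ hF hr hu.1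

lemma memoryIntegral_le (hβ : 0 < β) (hF : ∀ y ≥ 0, F y ∈ Icc 0 y) {r : ℝ} (hr : 0 ≤ r) :
    memoryIntegral β F r ≤ r ^ β := by
  have h := norm_setIntegral_le_of_norm_le_const (μ := volume) (s := Ioo 0 1) (C := r ^ β)
    (f := memoryIntegrand β F r) measure_Ioo_lt_top fun u hu => ?_
  · rw [volume_real_Ioo_of_le zero_le_one, sub_zero, mul_one] at h
    exact (le_abs_self _).trans h
  · rw [Real.norm_of_nonneg (memoryIntegrand_nonneg (fun y hy => (hF y hy).1) hr hu.1.le)]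
    exact memoryIntegrand_le hβ hF hr hu.1

lemma measurable_memoryIntegral (hFm : Measurable F) : Measurable (memoryIntegral β F) := by
  have h : StronglyMeasurable (Function.uncurry (memoryIntegrand β F)) := by
    unfold memoryIntegrand Function.uncurry
    exact Measurable.stronglyMeasurable (by fun_prop)
  exact (h.integral_prod_right' (ν := volume.restrict (Ioo 0 1))).measurable

/-- Substituting `y = r u^{1/β}` turns `y^s` into `r^s u^{s/β}`, and
`∫₀¹ u^{s/β - 1} du = β / s`. -/
lemma abs_memoryIntegral_sub_le (hβ : 0 < β) (hFm : Measurable F) (hHm : Measurable H)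
    (hF : ∀ y ≥ 0, F y ∈ Icc 0 y) (hH : ∀ y ≥ 0, H y ∈ Icc 0 y) {M s r : ℝ} (hs : 0 < s)
    (hr : 0 < r) (hbound : ∀ y ∈ Ioc 0 r, |F y ^ β - H y ^ β| ≤ M * y ^ s) :
    |memoryIntegral β F r - memoryIntegral β H r| ≤ M * β / s * r ^ s := by
  have hpt : ∀ u ∈ Ioo (0 : ℝ) 1,
      |memoryIntegrand β F r u - memoryIntegrand β H r u| ≤ M * r ^ s * u ^ (s / β - 1) := by
    intro u hu
    have hy : r * u ^ (1 / β) ∈ Ioc 0 r :=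
      ⟨by have := hu.1; positivity,
        mul_le_of_le_one_right hr.le (rpow_le_one hu.1.le hu.2.le (by positivity))⟩
    have hys : (r * u ^ (1 / β)) ^ s * u⁻¹ = r ^ s * u ^ (s / β - 1) := by
      rw [mul_rpow hr.le (rpow_nonneg hu.1.le _), ← rpow_mul hu.1.le, rpow_sub_one hu.1.ne',
        one_div_mul_eq_div]
      field_simp
    calc |memoryIntegrand β F r u - memoryIntegrand β H r u|
        = |F (r * u ^ (1 / β)) ^ β - H (r * u ^ (1 / β)) ^ β| * u⁻¹ := by
          rw [memoryIntegrand, memoryIntegrand, ← sub_mul, abs_mul, abs_of_pos (inv_pos.2 hu.1)]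
      _ ≤ M * (r * u ^ (1 / β)) ^ s * u⁻¹ :=
          mul_le_mul_of_nonneg_right (hbound _ hy) (inv_nonneg.2 hu.1.le)
      _ = M * r ^ s * u ^ (s / β - 1) := by rw [mul_assoc, hys, mul_assoc]
  have hFi := integrableOn_memoryIntegrand hβ hFm hF hr.le
  have hHi := integrableOn_memoryIntegrand hβ hHm hH hr.le
  have hexp : -1 < s / β - 1 := by have := div_pos hs hβ; linarith
  rw [memoryIntegral, memoryIntegral, ← integral_sub hFi hHi]
  calc |∫ u in Ioo 0 1, (memoryIntegrand β F r u - memoryIntegrand β H r u)|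
      ≤ ∫ u in Ioo 0 1, M * r ^ s * u ^ (s / β - 1) :=
        abs_integral_le_integral_abs.trans <| setIntegral_mono_on (hFi.sub hHi).abs
          ((integrableOn_Ioo_rpow hexp zero_le_one).const_mul _) measurableSet_Ioo hpt
    _ = M * β / s * r ^ s := by
        rw [integral_const_mul, integral_Ioo_rpow hexp zero_le_one, one_rpow, sub_add_cancel]
        field_simp

end Memory

section DelayMap

variable {κ β : ℝ} {F H : ℝ → ℝ}

lemma delayMap_nonneg {θ : ℝ} : 0 ≤ delayMap κ β F θ :=
  setIntegral_nonneg measurableSet_Ioo fun _ _ => (exp_pos _).le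

lemma delayMap_le_self (hκ : 0 ≤ κ) (hF : ∀ y ≥ 0, 0 ≤ F y) {θ : ℝ} (hθ : 0 ≤ θ) :
    delayMap κ β F θ ≤ θ := by
  have h := norm_setIntegral_le_of_norm_le_const (μ := volume) (s := Ioo 0 θ) (C := 1)
    (f := fun r => exp (-κ * memoryIntegral β F r)) measure_Ioo_lt_top fun r hr => ?_
  · rw [volume_real_Ioo_of_le hθ, one_mul, sub_zero] at h
    exact (le_abs_self _).trans h
  · rw [Real.norm_of_nonneg (exp_pos _).le, exp_le_one_iff, neg_mul, neg_nonpos]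
    exact mul_nonneg hκ (memoryIntegral_nonneg hF hr.1.le)

lemma integrableOn_exp_memoryIntegral (hκ : 0 ≤ κ) (hFm : Measurable F)
    (hF : ∀ y ≥ 0, 0 ≤ F y) (θ : ℝ) :
    IntegrableOn (fun r => exp (-κ * memoryIntegral β F r)) (Ioo 0 θ) := by
  refine Measure.integrableOn_of_bounded (M := 1) measure_Ioo_lt_top.ne
    ((measurable_memoryIntegral hFm).const_mul _).exp.aestronglyMeasurable ?_
  filter_upwards [ae_restrict_mem measurableSet_Ioo] with r hr
  rw [Real.norm_of_nonneg (exp_pos _).le, exp_le_one_iff, neg_mul, neg_nonpos]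
  exact mul_nonneg hκ (memoryIntegral_nonneg hF hr.1.le)

lemma exp_mul_le_delayMap (hβ : 0 < β) (hκ : 0 ≤ κ) (hFm : Measurable F)
    (hF : ∀ y ≥ 0, F y ∈ Icc 0 y) {x T : ℝ} (hx : 0 ≤ x) (hxT : x ≤ T) :
    exp (-κ * T ^ β) * x ≤ delayMap κ β F x := by
  calc exp (-κ * T ^ β) * x = ∫ _ in Ioo 0 x, exp (-κ * T ^ β) := by
        rw [setIntegral_const, volume_real_Ioo_of_le hx, sub_zero, smul_eq_mul, mul_comm]
    _ ≤ delayMap κ β F x := by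
        refine setIntegral_mono_on (integrableOn_const measure_Ioo_lt_top.ne)
          (integrableOn_exp_memoryIntegral hκ hFm (fun y hy => (hF y hy).1) x)
          measurableSet_Ioo fun r hr => exp_le_exp.2 ?_
        have hIT : memoryIntegral β F r ≤ T ^ β := (memoryIntegral_le hβ hF hr.1.le).trans
          (rpow_le_rpow hr.1.le (hr.2.le.trans hxT) hβ.le)
        rw [neg_mul, neg_mul, neg_le_neg_iff]
        exact mul_le_mul_of_nonneg_left hIT hκ

lemma abs_delayMap_sub_le (hκ : 0 ≤ κ) (hFm : Measurable F) (hHm : Measurable H)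
    (hF : ∀ y ≥ 0, 0 ≤ F y) (hH : ∀ y ≥ 0, 0 ≤ H y) {K s θ : ℝ} (hs : -1 < s) (hθ : 0 ≤ θ)
    (hbound : ∀ r ∈ Ioo 0 θ, |memoryIntegral β F r - memoryIntegral β H r| ≤ K * r ^ s) :
    |delayMap κ β F θ - delayMap κ β H θ| ≤ κ * K * (θ ^ (s + 1) / (s + 1)) := by
  have hpt : ∀ r ∈ Ioo 0 θ,
      |exp (-κ * memoryIntegral β F r) - exp (-κ * memoryIntegral β H r)| ≤ κ * K * r ^ s := by
    intro r hr
    have hFr := mul_nonneg hκ (memoryIntegral_nonneg (β := β) hF hr.1.le)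
    have hHr := mul_nonneg hκ (memoryIntegral_nonneg (β := β) hH hr.1.le)
    calc |exp (-κ * memoryIntegral β F r) - exp (-κ * memoryIntegral β H r)|
        ≤ |κ * memoryIntegral β F r - κ * memoryIntegral β H r| := by
          simpa only [neg_mul] using abs_exp_neg_sub_exp_neg_le hFr hHr
      _ = κ * |memoryIntegral β F r - memoryIntegral β H r| := by
          rw [← mul_sub, abs_mul, abs_of_nonneg hκ]
      _ ≤ κ * K * r ^ s := by
          rw [mul_assoc]
          exact mul_le_mul_of_nonneg_left (hbound r hr) hκ
  have hFi := integrableOn_exp_memoryIntegral (β := β) hκ hFm hF θ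
  have hHi := integrableOn_exp_memoryIntegral (β := β) hκ hHm hH θ
  rw [delayMap, delayMap, ← integral_sub hFi hHi]
  calc |∫ r in Ioo 0 θ, (exp (-κ * memoryIntegral β F r) - exp (-κ * memoryIntegral β H r))|
      ≤ ∫ r in Ioo 0 θ, κ * K * r ^ s :=
        abs_integral_le_integral_abs.trans <| setIntegral_mono_on (hFi.sub hHi).abs
          ((integrableOn_Ioo_rpow hs hθ).const_mul _) measurableSet_Ioo hpt
    _ = κ * K * (θ ^ (s + 1) / (s + 1)) := by rw [integral_const_mul, integral_Ioo_rpow hs hθ]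

lemma SolvesDelayEq.mem_Icc (hF : SolvesDelayEq κ β F) (hκ : 0 ≤ κ) :
    ∀ y ≥ 0, F y ∈ Icc 0 y := by
  have hF0 : ∀ y ≥ 0, 0 ≤ F y := fun y hy => (hF y hy).symm ▸ delayMap_nonneg
  exact fun y hy => ⟨hF0 y hy, (hF y hy).symm ▸ delayMap_le_self hκ hF0 hy⟩

lemma SolvesDelayEq.exp_mul_le (hF : SolvesDelayEq κ β F) (hβ : 0 < β) (hκ : 0 ≤ κ)
    (hFm : Measurable F) {x T : ℝ} (hx : 0 ≤ x) (hxT : x ≤ T) : exp (-κ * T ^ β) * x ≤ F x :=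
  (hF x hx).symm ▸ exp_mul_le_delayMap hβ hκ hFm (hF.mem_Icc hκ) hx hxT

lemma SolvesDelayEq.abs_sub_le (hF : SolvesDelayEq κ β F) (hH : SolvesDelayEq κ β H)
    (hβ : 0 < β) (hκ : 0 ≤ κ) (hFm : Measurable F) (hHm : Measurable H) {c θ : ℝ} (hc : 0 < c)
    (hFc : ∀ x ∈ Ioc 0 θ, c * x ≤ F x) (hHc : ∀ x ∈ Ioc 0 θ, c * x ≤ H x) (n : ℕ) :
    ∀ x ∈ Ioc 0 θ, |F x - H x| ≤
      (κ * β * max (c ^ (β - 1)) 1) ^ n / n.factorial * x ^ (1 + n * β) := by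
  set L := max (c ^ (β - 1)) 1
  have hFI := hF.mem_Icc hκ
  have hHI := hH.mem_Icc hκ
  induction n with
  | zero =>
    intro x hx
    simpa using abs_sub_le_of_nonneg_of_le (hFI x hx.1.le).1 (hFI x hx.1.le).2
      (hHI x hx.1.le).1 (hHI x hx.1.le).2
  | succ n ih =>
    intro x hx
    set B := (κ * β * L) ^ n / n.factorial
    have hpow : ∀ y ∈ Ioc 0 θ, |F y ^ β - H y ^ β| ≤ β * L * B * y ^ ((n + 1) * β) := by
      intro y hy
      calc |F y ^ β - H y ^ β| ≤ β * L * y ^ (β - 1) * |F y - H y| :=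
            abs_rpow_sub_rpow_le_of_mem_Icc hβ hc hy.1 ⟨hFc y hy, (hFI y hy.1.le).2⟩
              ⟨hHc y hy, (hHI y hy.1.le).2⟩
        _ ≤ β * L * y ^ (β - 1) * (B * y ^ (1 + n * β)) :=
            mul_le_mul_of_nonneg_left (ih y hy) (by have := hy.1; positivity)
        _ = β * L * B * (y ^ (β - 1) * y ^ (1 + n * β)) := by ring
        _ = β * L * B * y ^ ((n + 1) * β) := by rw [← rpow_add hy.1]; ring_nf
    have hs : 0 < ((n : ℝ) + 1) * β := by positivity
    have hmem : ∀ r ∈ Ioo 0 x, |memoryIntegral β F r - memoryIntegral β H r| ≤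
        β * L * B * β / ((n + 1) * β) * r ^ ((n + 1) * β) := fun r hr =>
      abs_memoryIntegral_sub_le hβ hFm hHm hFI hHI hs hr.1
        fun y hy => hpow y ⟨hy.1, hy.2.trans (hr.2.le.trans hx.2)⟩
    rw [hF x hx.1.le, hH x hx.1.le]
    calc |delayMap κ β F x - delayMap κ β H x|
        ≤ κ * (β * L * B * β / ((n + 1) * β)) *
            (x ^ ((n + 1) * β + 1) / ((n + 1) * β + 1)) :=
          abs_delayMap_sub_le hκ hFm hHm (fun y hy => (hFI y hy).1) (fun y hy => (hHI y hy).1)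
            (by linarith) hx.1.le hmem
      _ ≤ κ * (β * L * B * β / ((n + 1) * β)) * x ^ ((n + 1) * β + 1) := by
          gcongr
          exact div_le_self (rpow_nonneg hx.1.le _) (by linarith)
      _ = (κ * β * L) ^ (n + 1) / (n + 1).factorial * x ^ (1 + ↑(n + 1) * β) := by
          rw [Nat.factorial_succ, pow_succ]
          simp only [B]
          push_cast
          field_simp
          ring_nf

theorem SolvesDelayEq.eq (hF : SolvesDelayEq κ β F) (hH : SolvesDelayEq κ β H) (hβ : 0 < β)
    (hκ : 0 ≤ κ) (hFm : Measurable F) (hHm : Measurable H) {θ : ℝ} (hθ : 0 < θ) : F θ = H θ := by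
  set A := κ * β * max (exp (-κ * θ ^ β) ^ (β - 1)) 1
  have hbound : ∀ n : ℕ, |F θ - H θ| ≤ θ * ((A * θ ^ β) ^ n / n.factorial) := fun n => by
    refine (hF.abs_sub_le hH hβ hκ hFm hHm (exp_pos _)
      (fun x hx => hF.exp_mul_le hβ hκ hFm hx.1.le hx.2)
      (fun x hx => hH.exp_mul_le hβ hκ hHm hx.1.le hx.2) n θ ⟨hθ, le_rfl⟩).trans_eq ?_
    rw [rpow_add hθ, rpow_one, mul_comm (n : ℝ) β, rpow_mul_natCast hθ.le, mul_pow]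
    ring
  have hlim : Tendsto (fun n : ℕ => θ * ((A * θ ^ β) ^ n / n.factorial)) atTop (nhds 0) := by
    simpa using (FloorSemiring.tendsto_pow_div_factorial_atTop (A * θ ^ β)).const_mul θ
  exact sub_eq_zero.1 (abs_nonpos_iff.1 (ge_of_tendsto' hlim hbound))

end DelayMap

section Solution

variable {β : ℝ}

lemma measurable_delaySolution : Measurable (delaySolution β) := by
  unfold delaySolution
  fun_prop

lemma continuousOn_one_add_rpow_rpow (hβ : 0 < β) (p : ℝ) :
    ContinuousOn (fun r : ℝ => (1 + r ^ β) ^ p) (Ici 0) :=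
  (continuous_const.add (continuous_rpow_const hβ.le)).continuousOn.rpow_const
    fun r (hr : 0 ≤ r) => Or.inl (by linarith [rpow_nonneg hr β] : (0 : ℝ) < 1 + r ^ β).ne'

lemma delaySolution_rpow (hβ : 0 < β) {x : ℝ} (hx : 0 ≤ x) :
    delaySolution β x ^ β = x ^ β / (1 + x ^ β) := by
  have hy : 0 < 1 + x ^ β := by positivity
  rw [delaySolution, mul_rpow hx (rpow_nonneg hy.le _), ← rpow_mul hy.le, neg_mul,
    one_div_mul_cancel hβ.ne', rpow_neg_one, div_eq_mul_inv]

lemma memoryIntegral_delaySolution (hβ : 0 < β) {r : ℝ} (hr : 0 ≤ r) :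
    memoryIntegral β (delaySolution β) r = log (1 + r ^ β) := by
  have hcongr : ∀ u ∈ Ioo (0 : ℝ) 1,
      memoryIntegrand β (delaySolution β) r u = r ^ β / (1 + r ^ β * u) := by
    intro u hu
    have := hu.1
    rw [memoryIntegrand, delaySolution_rpow hβ (by positivity),
      mul_rpow_one_div_rpow hβ.ne' hr hu.1.le]
    field_simp
  have hderiv : ∀ u ∈ uIcc (0 : ℝ) 1,
      HasDerivAt (fun u => log (1 + r ^ β * u)) (r ^ β / (1 + r ^ β * u)) u := by
    intro u hu
    rw [uIcc_of_le zero_le_one] at hu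
    have := hu.1
    simpa using (((hasDerivAt_id u).const_mul (r ^ β)).const_add 1).log (by positivity)
  have hcont : ContinuousOn (fun u : ℝ => r ^ β / (1 + r ^ β * u)) (uIcc 0 1) := by
    rw [uIcc_of_le zero_le_one]
    exact continuousOn_const.div (by fun_prop) fun u hu => by have := hu.1; positivity
  rw [memoryIntegral, setIntegral_congr_fun measurableSet_Ioo hcongr,
    ← integral_Ioc_eq_integral_Ioo, ← intervalIntegral.integral_of_le zero_le_one,
    intervalIntegral.integral_eq_sub_of_hasDerivAt hderiv hcont.intervalIntegrable]
  simp

lemma hasDerivAt_delaySolution (hβ : 0 < β) {r : ℝ} (hr : 0 < r) :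
    HasDerivAt (delaySolution β) ((1 + r ^ β) ^ (-(1 / β) - 1)) r := by
  have hy : 0 < 1 + r ^ β := by positivity
  have h := (hasDerivAt_id' r).mul (((hasDerivAt_rpow_const (p := β) (Or.inl hr.ne')).const_add
    1).rpow_const (p := -(1 / β)) (Or.inl hy.ne'))
  refine h.congr_deriv ?_
  have e1 : (1 + r ^ β) ^ (-(1 / β)) = (1 + r ^ β) * (1 + r ^ β) ^ (-(1 / β) - 1) := by
    rw [← rpow_one_add' hy.le (by simp [hβ.ne']), add_sub_cancel]
  have e2 : r * r ^ (β - 1) = r ^ β := by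
    rw [← rpow_one_add' hr.le (by simp [hβ.ne']), add_sub_cancel]
  rw [e1]
  field_simp
  rw [e2]
  ring

lemma solvesDelayEq_delaySolution (hβ : 0 < β) :
    SolvesDelayEq ((β + 1) / β) β (delaySolution β) := by
  intro θ hθ
  have hint : ∀ r ∈ Ioo 0 θ, exp (-((β + 1) / β) * memoryIntegral β (delaySolution β) r) =
      (1 + r ^ β) ^ (-(1 / β) - 1) := by
    intro r hr
    have h1 : 0 < 1 + r ^ β := by have := hr.1; positivity
    rw [memoryIntegral_delaySolution hβ hr.1.le, rpow_def_of_pos h1]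
    congr 1
    field_simp
    ring
  have hcont : ContinuousOn (delaySolution β) (Icc 0 θ) :=
    (continuousOn_id.mul (continuousOn_one_add_rpow_rpow hβ _)).mono Icc_subset_Ici_self
  have hderiv_int : IntervalIntegrable (fun r => (1 + r ^ β) ^ (-(1 / β) - 1)) volume 0 θ :=
    ((continuousOn_one_add_rpow_rpow hβ _).mono Icc_subset_Ici_self).intervalIntegrable_of_Icc hθ
  rw [delayMap, setIntegral_congr_fun measurableSet_Ioo hint, ← integral_Ioc_eq_integral_Ioo,
    ← intervalIntegral.integral_of_le hθ, intervalIntegral.integral_eq_sub_of_hasDerivAt_of_le hθ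
      hcont (fun r hr => hasDerivAt_delaySolution hβ hr.1) hderiv_int]
  simp [delaySolution]

lemma delaySolution_eq (hβ : 0 < β) {θ : ℝ} (hθ : 0 < θ) :
    delaySolution β θ = (1 + θ ^ (-β)) ^ (-(1 / β)) := by
  have h : 1 + θ ^ (-β) = θ ^ (-β) * (1 + θ ^ β) := by
    rw [mul_add, mul_one, ← rpow_add hθ, neg_add_cancel, rpow_zero, add_comm]
  rw [h, mul_rpow (by positivity) (by positivity), ← rpow_mul hθ.le, neg_mul_neg,
    mul_one_div_cancel hβ.ne', rpow_one, delaySolution]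

end Solution

theorem stmt_13_general (α : ℝ) (hα1 : 1 < α)
    (G : ℝ → ℝ) (hGmeas : Measurable G)
    (hGeq : ∀ θ ≥ (0 : ℝ), G θ = ∫ r in Set.Ioo 0 θ,
      Real.exp (-(α / (α - 1)) *
        ∫ u in Set.Ioo (0:ℝ) 1, G (r * u ^ (1 / (α - 1))) ^ (α - 1) * u⁻¹)) :
    G 0 = 0 ∧ ∀ θ > (0 : ℝ), G θ = (1 + θ ^ (-(α - 1))) ^ (-(1 / (α - 1))) := by
  have hβ : 0 < α - 1 := sub_pos.2 hα1
  have hκ : 0 ≤ α / (α - 1) := div_nonneg (by linarith) hβ.le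
  have hG : SolvesDelayEq (α / (α - 1)) (α - 1) G := hGeq
  have hS : SolvesDelayEq (α / (α - 1)) (α - 1) (delaySolution (α - 1)) := by
    simpa only [sub_add_cancel] using solvesDelayEq_delaySolution hβ
  refine ⟨by simpa using hGeq 0 le_rfl, fun θ hθ => ?_⟩
  rw [hG.eq hS hβ hκ hGmeas measurable_delaySolution hθ, delaySolution_eq hβ hθ]

/-- Lemma A.2 (uniqueness part): for `α ∈ (1,2)`, any measurable `G : [0,∞) → [0,∞)` solving
the nonlinear delay equation
`G(θ) = ∫_0^θ exp{-(α/(α-1)) ∫_0^1 G(r u^{1/(α-1)})^{α-1} u⁻¹ du} dr`, `θ ≥ 0`,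
satisfies `G(0) = 0` and `G(θ) = (1 + θ^{-(α-1)})^{-1/(α-1)}` for `θ > 0`. -/
theorem stmt_13 (α : ℝ) (hα1 : 1 < α) (hα2 : α < 2)
    (G : ℝ → ℝ) (hGmeas : Measurable G) (hGnonneg : ∀ θ ≥ (0 : ℝ), 0 ≤ G θ)
    (hGeq : ∀ θ ≥ (0 : ℝ), G θ = ∫ r in Set.Ioo 0 θ,
      Real.exp (-(α / (α - 1)) *
        ∫ u in Set.Ioo (0:ℝ) 1, G (r * u ^ (1 / (α - 1))) ^ (α - 1) * u⁻¹)) :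
    G 0 = 0 ∧ ∀ θ > (0 : ℝ), G θ = (1 + θ ^ (-(α - 1))) ^ (-(1 / (α - 1))) :=
  stmt_13_general α hα1 G hGmeas hGeq
end
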